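/- arXiv:1309.0844 — 11 statements merged into one kernel-verified Lean document; each statement's English description precedes it below -/
import Mathlib

section
/- Given a map c : X → TX in A that is the equalizer of T(c), T(η) : TX ⇉ T²X, the map a := (equalizer factorization of μ ∘ T(c) through c) defines a T-algebra structure a : TX → X, and c is a T̄-coalgebra on this algebra. -/
/-!
Write `c^♯ := μ ∘ T(c)` for the Kleisli extension of `c`. Naturality of `μ` turns
`T(f) ∘ c^♯` into `(T(f) ∘ c)^♯`, so `c^♯` equalizes `T(c)` and `T(η)` and factors as
`c ∘ a`. Since the equalizer `c` is mono, each law for `a` may be checked after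
composing with `c`, where it becomes a unit or associativity law of the monad
(and, for `a ∘ c = id`, the equalizing identity `T(c) ∘ c = T(η) ∘ c`).
-/

open CategoryTheory CategoryTheory.Limits

namespace CategoryTheory.Monad

variable {A : Type u} [Category.{v} A] (T : Monad A)

lemma map_comp_mu_comp_map_eq {X Y Z : A} {c : X ⟶ T.obj Y} {f g : Y ⟶ Z}
    (h : c ≫ T.map f = c ≫ T.map g) :
    (T.map c ≫ T.μ.app Y) ≫ T.map f = (T.map c ≫ T.μ.app Y) ≫ T.map g := by
  have hμ : ∀ k : Y ⟶ Z, (T.map c ≫ T.μ.app Y) ≫ T.map k = T.map (c ≫ T.map k) ≫ T.μ.app Z := by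
    intro k
    rw [Category.assoc, ← T.μ.naturality k, Functor.comp_map, T.map_comp, Category.assoc]
  rw [hμ, hμ, h]

variable {T}

section Retract

variable {X : A} {c : X ⟶ T.obj X} [Mono c] {a : T.obj X ⟶ X}

lemma eta_comp_eq_id_of_comp_eq (ha : a ≫ c = T.map c ≫ T.μ.app X) :
    T.η.app X ≫ a = 𝟙 X := by
  refine (cancel_mono c).1 ?_
  rw [Category.assoc, ha, ← Category.assoc, ← T.η.naturality c]
  simp

lemma map_comp_eq_mu_comp_of_comp_eq (ha : a ≫ c = T.map c ≫ T.μ.app X) :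
    T.map a ≫ a = T.μ.app X ≫ a := by
  refine (cancel_mono c).1 ?_
  calc (T.map a ≫ a) ≫ c = T.map (T.map c ≫ T.μ.app X) ≫ T.μ.app X := by
        rw [Category.assoc, ha, ← Category.assoc, ← T.map_comp, ha]
    _ = T.map (T.map c) ≫ T.μ.app (T.obj X) ≫ T.μ.app X := by
        rw [T.map_comp, Category.assoc, T.assoc]
    _ = (T.μ.app X ≫ a) ≫ c := by
        rw [Category.assoc, ha, ← Category.assoc, ← Category.assoc]
        exact congrArg (· ≫ T.μ.app X) (T.μ.naturality c)

lemma comp_eq_id_of_comp_eq (hw : c ≫ T.map c = c ≫ T.map (T.η.app X))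
    (ha : a ≫ c = T.map c ≫ T.μ.app X) : c ≫ a = 𝟙 X := by
  refine (cancel_mono c).1 ?_
  rw [Category.assoc, ha, ← Category.assoc, hw, Category.assoc]
  simp

end Retract

end CategoryTheory.Monad

open CategoryTheory.Monad in
/-- Given a map `c : X → TX` which is the equalizer of `T(c), T(η) : TX ⇉ T²X`, the
factorization `a : TX → X` of `μ ∘ T(c)` through the equalizer `c` (i.e. the map with
`c ∘ a = μ ∘ T(c)`) is a `T`-algebra structure on `X`, and `c` is a `T̄`-coalgebra on
this algebra (it is a map of algebras, satisfies `a ∘ c = id`, and the coassociativity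
equation `T(η) ∘ c = T(c) ∘ c` holds by assumption). -/
theorem bases_as_coalgebras_stmt3 {A : Type u} [Category.{v} A] (T : Monad A) (X : A)
    (c : X ⟶ T.obj X)
    (hw : c ≫ T.map c = c ≫ T.map (T.η.app X))
    (hl : IsLimit (Fork.ofι c hw)) :
    ∃ a : T.obj X ⟶ X,
      -- `a` is the equalizer factorization of `μ ∘ T(c)` through `c`,
      -- equivalently `c` is a morphism of algebras `a → μ`:
      a ≫ c = T.map c ≫ T.μ.app X ∧
      -- `a` is a `T`-algebra structure:
      T.η.app X ≫ a = 𝟙 X ∧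
      T.map a ≫ a = T.μ.app X ≫ a ∧
      -- `c` is a `T̄`-coalgebra on this algebra:
      c ≫ a = 𝟙 X := by
  have : Mono c := Fork.IsLimit.mono hl
  let a := Fork.IsLimit.lift hl _ (T.map_comp_mu_comp_map_eq hw)
  have ha : a ≫ c = T.map c ≫ T.μ.app X := Fork.IsLimit.lift_ι' hl _ _
  exact ⟨a, ha, eta_comp_eq_id_of_comp_eq ha, map_comp_eq_mu_comp_of_comp_eq ha,
    comp_eq_id_of_comp_eq hw ha⟩
end

section
/- Let T be a monad on Sets and (a : TX → X) an algebra with a basis b : X → TX (a T̄-coalgebra). Let e : X_b ↪ X be the equalizer of b and η_X, and suppose X_b is nonempty. Then the induced algebra map a ∘ T(e) : T(X_b) → X is an isomorphism of T-algebras; in particular, any Set-based algebra with a nonempty basis is free. -/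
/-!
The pair `η, b : X ⟶ T X` is coreflexive, with common retraction the structure map `a`. In `Type`
such a pair with a nonempty equalizer `e : X_b ↪ X` is a split equalizer: `T X ⟶ X` is `a` on the
image of `b` and constant at a point of `X_b` elsewhere, and `X ⟶ X_b` fixes `X_b` and sends
the rest to that point. The splitting `s : X ⟶ X_b` yields the inverse `T s ∘ b` of `a ∘ T e`:
one composite collapses by `b ∘ a = μ ∘ T b`, `b ∘ e = η ∘ e` and the unit law of `T`, the other
by coassociativity of `b`, the splitting identities and `a ∘ b = 1`.
-/

open CategoryTheory

namespace CategoryTheory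

open Classical in
noncomputable def Types.isSplitEqualizerOfCommonRetraction {A B : Type u} {f g : A ⟶ B}
    (r : B ⟶ A) (hf : f ≫ r = 𝟙 A) (hg : g ≫ r = 𝟙 A) (w : {x : A // g x = f x}) :
    IsSplitEqualizer f g (TypeCat.ofHom (fun x : {x : A // g x = f x} => x.1)) where
  leftRetraction := TypeCat.ofHom fun x => if h : g x = f x then ⟨x, h⟩ else w
  rightRetraction := TypeCat.ofHom fun y => if y ∈ Set.range g then r y else w.1
  condition := by ext x; exact x.2.symm
  ι_leftRetraction := by ext x; simp [x.2]
  bottom_rightRetraction := by ext x; simpa using ConcreteCategory.congr_hom hg x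
  top_rightRetraction := by
    ext x
    have hfx : r (f x) = x := by simpa using ConcreteCategory.congr_hom hf x
    have hrange : f x ∈ Set.range g ↔ g x = f x := by
      refine ⟨?_, fun h => ⟨x, h⟩⟩
      rintro ⟨y, hy⟩
      have hgy : r (g y) = y := by simpa using ConcreteCategory.congr_hom hg y
      obtain rfl : y = x := by rw [← hgy, hy, hfx]
      exact hy
    by_cases h : g x = f x
    · simp only [TypeCat.Fun.toFun_apply, types_comp_apply, TypeCat.ofHom_apply, dif_pos h,
        if_pos (hrange.2 h), hfx]
    · simp only [TypeCat.Fun.toFun_apply, types_comp_apply, TypeCat.ofHom_apply, dif_neg h,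
        if_neg (mt hrange.1 h)]

theorem Monad.adj_homEquiv_symm_f {C : Type*} [Category C] (T : Monad C) {W : C}
    {X : T.Algebra} (g : W ⟶ T.forget.obj X) :
    ((T.adj.homEquiv W X).symm g).f = T.map g ≫ X.a := by
  rw [Adjunction.homEquiv_counit, Monad.Algebra.comp_f, Monad.free_map_f, Monad.adj_counit]
  rfl

theorem Monad.isIso_map_comp_a_of_isSplitEqualizer {C : Type*} [Category C] {T : Monad C}
    {X : T.Algebra} {b : X.A ⟶ T.obj X.A}
    (h1 : X.a ≫ b = T.map b ≫ T.μ.app X.A) (h2 : b ≫ X.a = 𝟙 X.A)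
    (h3 : b ≫ T.map (T.η.app X.A) = b ≫ T.map b)
    {W : C} {ι : W ⟶ X.A} (hι : IsSplitEqualizer (T.η.app X.A) b ι) :
    IsIso (T.map ι ≫ X.a) := by
  refine ⟨b ≫ T.map hι.leftRetraction, ?_, ?_⟩
  · calc (T.map ι ≫ X.a) ≫ b ≫ T.map hι.leftRetraction
        = T.map (ι ≫ T.η.app X.A) ≫ T.μ.app X.A ≫ T.map hι.leftRetraction := by
          rw [Category.assoc, reassoc_of% h1, ← Functor.map_comp_assoc, hι.condition]
      _ = 𝟙 _ := by
          rw [Functor.map_comp_assoc, Monad.right_unit_assoc, ← Functor.map_comp,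
            hι.ι_leftRetraction, T.map_id]
  · calc (b ≫ T.map hι.leftRetraction) ≫ T.map ι ≫ X.a
        = b ≫ T.map b ≫ T.map hι.rightRetraction ≫ X.a := by
          rw [Category.assoc, ← Functor.map_comp_assoc, ← hι.top_rightRetraction,
            Functor.map_comp_assoc, reassoc_of% h3]
      _ = 𝟙 _ := by
          rw [← Functor.map_comp_assoc, hι.bottom_rightRetraction]
          simpa using h2

end CategoryTheory

/-- For a monad `T` on `Sets` and an algebra `(a : TX → X)` with a basis
`b : X → TX` (a `T̄`-coalgebra), if the equalizer `X_b = {x | b x = η x}` of `b` and `η`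
is nonempty, then the adjoint transpose `a ∘ T(e) : T(X_b) → X` of the inclusion
`e : X_b ↪ X` is an isomorphism of `T`-algebras; in particular any set-based algebra
with a nonempty basis is free. -/
theorem bases_as_coalgebras_stmt4 (T : Monad (Type u)) (X : T.Algebra)
    (b : X.A ⟶ T.obj X.A)
    (h1 : X.a ≫ b = T.map b ≫ T.μ.app X.A)
    (h2 : b ≫ X.a = 𝟙 X.A)
    (h3 : b ≫ T.map (T.η.app X.A) = b ≫ T.map b)
    (hne : Nonempty {x : X.A // b x = T.η.app X.A x}) :
    IsIso ((T.adj.homEquiv {x : X.A // b x = T.η.app X.A x} X).symm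
      (TypeCat.ofHom (fun x => x.1))) := by
  have hsplit := Types.isSplitEqualizerOfCommonRetraction X.a X.unit h2 hne.some
  have : IsIso ((T.adj.homEquiv {x : X.A // b x = T.η.app X.A x} X).symm
      (TypeCat.ofHom (fun x => x.1))).f := by
    rw [Monad.adj_homEquiv_symm_f]
    exact Monad.isIso_map_comp_a_of_isSplitEqualizer h1 h2 h3 hsplit
  exact Monad.algebra_iso_of_iso T _
end

section
/- For the powerset monad P on Sets, whose algebras are complete lattices with join, a complete lattice L carries a coalgebra structure b : L → P(L) for the induced comonad P̄ on complete lattices (i.e., a join-preserving map with ⋁ b(x) = x and {{y} : y ∈ b(x)} = {b(y) : y ∈ b(x)}) if and only if L is atomic; in that case b(x) is necessarily the set of atoms below x. -/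
/-!
A coalgebra `b` sends every element of `b x` to its own singleton, so each `y ∈ b x` has
`b y = {y}`; since `b` is join-preserving (hence monotone, with `b ⊥ = ∅`) and `⋁ b z = z`,
such a `y` is nonzero, has only `⊥` strictly below it, and lies below a member of `U`
whenever it lies below `⋁ U`: it is an atom. Conversely every atom `a ≤ x = ⋁ b x` lies
below, hence equals, some member of `b x`. So `b x` is the set of atoms below `x`, and
this map is a coalgebra exactly when every element is the join of the atoms below it.
-/

/-- An atom of a complete lattice in the sense of the paper: a non-zero element with no
non-zero elements strictly below it, satisfying `a ≤ ⋁ U → ∃ x ∈ U, a ≤ x`. -/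
def PaperAtom {L : Type u} [CompleteLattice L] (a : L) : Prop :=
  a ≠ ⊥ ∧ (∀ x : L, x < a → x = ⊥) ∧ ∀ U : Set L, a ≤ sSup U → ∃ x ∈ U, a ≤ x

section Atoms

variable {L : Type*} [CompleteLattice L]

theorem PaperAtom.isAtom {a : L} (ha : PaperAtom a) : IsAtom a := ⟨ha.1, ha.2.1⟩

theorem PaperAtom.eq_of_le {a z : L} (ha : PaperAtom a) (hz : PaperAtom z) (h : a ≤ z) :
    a = z :=
  (hz.isAtom.le_iff_eq ha.1).mp h

theorem setOf_paperAtom_le_eq_singleton {a : L} (ha : PaperAtom a) :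
    {z | PaperAtom z ∧ z ≤ a} = {a} := by
  ext z
  refine ⟨fun ⟨hz, hza⟩ => hz.eq_of_le ha hza, ?_⟩
  rintro rfl
  exact ⟨ha, le_rfl⟩

theorem setOf_paperAtom_le_sSup (S : Set L) :
    {a | PaperAtom a ∧ a ≤ sSup S} = ⋃ x ∈ S, {a | PaperAtom a ∧ a ≤ x} := by
  ext a
  simp only [Set.mem_ofPred_eq, Set.mem_iUnion, exists_prop]
  constructor
  · rintro ⟨ha, hle⟩
    obtain ⟨x, hx, hax⟩ := ha.2.2 S hle
    exact ⟨x, hx, ha, hax⟩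
  · rintro ⟨x, hx, ha, hax⟩
    exact ⟨ha, hax.trans (le_sSup hx)⟩

end Atoms

/-- A coalgebra for the comonad induced by the powerset monad on complete lattices. -/
structure IsPowersetCoalgebra {L : Type*} [CompleteLattice L] (b : L → Set L) : Prop where
  map_sSup : ∀ S : Set L, b (sSup S) = ⋃ x ∈ S, b x
  sSup_apply : ∀ x : L, sSup (b x) = x
  image_singleton : ∀ x : L, (fun y => ({y} : Set L)) '' b x = b '' b x

namespace IsPowersetCoalgebra

variable {L : Type*} [CompleteLattice L] {b : L → Set L} (hb : IsPowersetCoalgebra b)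
include hb

theorem map_bot : b ⊥ = ∅ := by simpa using hb.map_sSup ∅

theorem monotone : Monotone b := by
  intro u v huv
  have h := hb.map_sSup {u, v}
  rw [sSup_pair, sup_eq_right.mpr huv] at h
  rw [h]
  exact Set.subset_biUnion_of_mem (u := b) (Set.mem_insert u {v})

theorem eq_singleton_of_mem {x y : L} (hy : y ∈ b x) : b y = {y} := by
  obtain ⟨z, -, hz⟩ : {y} ∈ b '' b x := hb.image_singleton x ▸ ⟨y, hy, rfl⟩
  have hzy : z = y := by simpa [hz] using (hb.sSup_apply z).symm
  exact hzy ▸ hz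

theorem paperAtom_of_mem {x y : L} (hy : y ∈ b x) : PaperAtom y := by
  have hby := hb.eq_singleton_of_mem hy
  refine ⟨?_, ?_, ?_⟩
  · rintro rfl
    exact Set.singleton_ne_empty ⊥ (hby.symm.trans hb.map_bot)
  · intro z hz
    have hsub : b z ⊆ {y} := hby ▸ hb.monotone hz.le
    rcases Set.subset_singleton_iff_eq.mp hsub with h | h
    · rw [← hb.sSup_apply z, h, sSup_empty]
    · exact absurd (by rw [← hb.sSup_apply z, h, sSup_singleton]) hz.ne
  · intro U hU
    have hmem : y ∈ b (sSup U) := hb.monotone hU (hby ▸ Set.mem_singleton y)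
    rw [hb.map_sSup] at hmem
    obtain ⟨x₀, hx₀, hyx₀⟩ := Set.mem_iUnion₂.mp hmem
    exact ⟨x₀, hx₀, hb.sSup_apply x₀ ▸ le_sSup hyx₀⟩

theorem eq_setOf_paperAtom_le (x : L) : b x = {a | PaperAtom a ∧ a ≤ x} := by
  ext a
  refine ⟨fun ha => ⟨hb.paperAtom_of_mem ha, hb.sSup_apply x ▸ le_sSup ha⟩, ?_⟩
  rintro ⟨ha, hax⟩
  obtain ⟨z, hz, haz⟩ := ha.2.2 (b x) (by rwa [hb.sSup_apply])
  rwa [ha.eq_of_le (hb.paperAtom_of_mem hz) haz]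

end IsPowersetCoalgebra

theorem isPowersetCoalgebra_setOf_paperAtom_le {L : Type*} [CompleteLattice L]
    (hL : ∀ x : L, x = sSup {a | PaperAtom a ∧ a ≤ x}) :
    IsPowersetCoalgebra fun x : L => {a | PaperAtom a ∧ a ≤ x} where
  map_sSup := setOf_paperAtom_le_sSup
  sSup_apply x := (hL x).symm
  image_singleton _ := Set.image_congr fun _ ha => (setOf_paperAtom_le_eq_singleton ha.1).symm

/-- For the powerset monad on `Sets`, whose algebras are complete lattices with join,
a complete lattice `L` carries a coalgebra structure `b : L → P(L)` for the induced
comonad (a join-preserving map with `⋁ b(x) = x` and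
`{{y} : y ∈ b(x)} = {b(y) : y ∈ b(x)}`) iff `L` is atomic; in that case `b x` is
necessarily the set of atoms below `x`. -/
theorem bases_as_coalgebras_stmt6 {L : Type u} [CompleteLattice L] :
    ((∃ b : L → Set L,
        (∀ S : Set L, b (sSup S) = ⋃ x ∈ S, b x) ∧
        (∀ x : L, sSup (b x) = x) ∧
        (∀ x : L, (fun y => ({y} : Set L)) '' b x = b '' b x)) ↔
      (∀ x : L, x = sSup {a | PaperAtom a ∧ a ≤ x})) ∧
    (∀ b : L → Set L,
      (∀ S : Set L, b (sSup S) = ⋃ x ∈ S, b x) →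
      (∀ x : L, sSup (b x) = x) →
      (∀ x : L, (fun y => ({y} : Set L)) '' b x = b '' b x) →
      ∀ x : L, b x = {a | PaperAtom a ∧ a ≤ x}) := by
  refine ⟨⟨?_, fun hL => ?_⟩,
    fun b h₁ h₂ h₃ => (IsPowersetCoalgebra.mk h₁ h₂ h₃).eq_setOf_paperAtom_le⟩
  · rintro ⟨b, h₁, h₂, h₃⟩ x
    rw [← (IsPowersetCoalgebra.mk h₁ h₂ h₃).eq_setOf_paperAtom_le x, h₂]
  · obtain ⟨h₁, h₂, h₃⟩ := isPowersetCoalgebra_setOf_paperAtom_le hL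
    exact ⟨_, h₁, h₂, h₃⟩
end

section
/- Let S be a field (e.g., ℝ or ℂ) and X a vector space over S, viewed as an algebra for the finite multiset (free module) monad M_S. Then coalgebra structures b : X → M_S(X) for the induced comonad on S-modules are in bijective correspondence with (Hamel) bases of X: a basis B gives b(x) = the formal sum of the coordinates of x in B, and conversely the set {a ∈ X : b(a) = 1·a} of a coalgebra b is a linearly independent spanning set. -/
/-!
A basis `B` gives the coalgebra `v ↦ ∑ᵢ (B.repr v i) · B i`; coassociativity reduces to the
basis vectors, which are sent to `1 · B i`. Conversely, if `b` is a coalgebra and `x` occurs in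
some `b v`, then `1 · x` occurs in `M_S(η)(b v) = M_S(b)(b v)`, so `b y = 1 · x` for some `y`,
and the counit law forces `y = x`. Hence every `b v` is supported on the grouplike elements
`{a | b a = 1 · a}`: by the counit law they span, and `b` maps them to the independent family
`1 · a`.
-/

open Finsupp

/-- The coalgebra laws `ε ∘ b = id` and `M(η) ∘ b = M(b) ∘ b` for the comonad induced by the
free-module monad `M X = X →₀ R`. -/
structure IsFreeModuleCoalgebra {R M : Type*} [Semiring R] [AddCommMonoid M] [Module R M]
    (b : M →ₗ[R] (M →₀ R)) : Prop where
  counit : ∀ v : M, (b v).sum (fun x r => r • x) = v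
  coassoc : ∀ v : M, mapDomain (fun x => single x (1 : R)) (b v) = mapDomain b (b v)

namespace Module.Basis

variable {ι R M : Type*} [Semiring R] [AddCommMonoid M] [Module R M] (B : Basis ι R M)

noncomputable def toCoalgebra : M →ₗ[R] (M →₀ R) :=
  lmapDomain R R B ∘ₗ B.repr

theorem toCoalgebra_apply (v : M) : B.toCoalgebra v = mapDomain B (B.repr v) := rfl

theorem toCoalgebra_basis (i : ι) : B.toCoalgebra (B i) = single (B i) 1 := by
  simp [toCoalgebra_apply, mapDomain_single]

theorem isFreeModuleCoalgebra_toCoalgebra : IsFreeModuleCoalgebra B.toCoalgebra where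
  counit v := by
    rw [toCoalgebra_apply, sum_mapDomain_index (by simp) (fun _ _ _ => add_smul _ _ _)]
    exact B.linearCombination_repr v
  coassoc v := by
    simp only [toCoalgebra_apply, ← mapDomain_comp]
    congr 1
    funext i
    exact (B.toCoalgebra_basis i).symm

end Module.Basis

theorem linearIndependent_of_apply_eq_single_one {R M : Type*} [Semiring R] [AddCommMonoid M]
    [Module R M] (b : M →ₗ[R] (M →₀ R)) :
    LinearIndependent R ((↑) : {a : M // b a = single a 1} → M) := by
  apply LinearIndependent.of_comp b
  have himage : b ∘ ((↑) : {a : M // b a = single a 1} → M) =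
      fun a : {a : M // b a = single a 1} => single (a : M) (1 : R) :=
    funext fun a => a.2
  rw [himage]
  exact (Finsupp.basisSingleOne (R := R) (ι := M)).linearIndependent.comp _ Subtype.val_injective

namespace IsFreeModuleCoalgebra

variable {R M : Type*} [Semiring R] [Nontrivial R] [AddCommMonoid M] [Module R M]
  {b : M →ₗ[R] (M →₀ R)}

theorem apply_eq_single_of_mem_support (hb : IsFreeModuleCoalgebra b) {v x : M}
    (hx : x ∈ (b v).support) : b x = single x 1 := by
  classical
  have hsingle : single x (1 : R) ∈ (mapDomain b (b v)).support := by
    rw [← hb.coassoc, mem_support_iff,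
      mapDomain_apply (single_left_injective one_ne_zero)]
    exact mem_support_iff.mp hx
  obtain ⟨y, -, hy⟩ := Finset.mem_image.mp (mapDomain_support hsingle)
  have hyx : y = x := by
    simpa [hy] using (hb.counit y).symm
  rwa [hyx] at hy

theorem span_eq_top (hb : IsFreeModuleCoalgebra b) :
    Submodule.span R {a : M | b a = single a 1} = ⊤ := by
  refine Submodule.eq_top_iff'.mpr fun v => ?_
  rw [← hb.counit v]
  exact Submodule.sum_mem _ fun x hx =>
    Submodule.smul_mem _ _ (Submodule.subset_span (hb.apply_eq_single_of_mem_support hx))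

end IsFreeModuleCoalgebra

/-- For a vector space `X` over a field `S`, viewed as an algebra of the finite multiset
(free module) monad `M_S` (`M_S X = X →₀ S`), coalgebras `b : X → M_S X` for the induced
comonad correspond to (Hamel) bases of `X`:
(i) every basis `B` yields a coalgebra `b` sending `v` to the formal sum of its
coordinates w.r.t. `B` (satisfying the counit law `ε ∘ b = id` and the coassociativity
law `M_S(η) ∘ b = M_S(b) ∘ b`); and
(ii) conversely, for every coalgebra `b` (a linear map satisfying the counit and
coassociativity laws) the set `{a : X | b a = 1·a}` is linearly independent and spans. -/
theorem bases_as_coalgebras_stmt7 (S : Type u) [Field S]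
    (X : Type v) [AddCommGroup X] [Module S X] :
    (∀ (ι : Type v) (B : Module.Basis ι S X),
      ∃ b : X →ₗ[S] (X →₀ S),
        (∀ v : X, b v = Finsupp.mapDomain B (B.repr v)) ∧
        (∀ v : X, (b v).sum (fun x r => r • x) = v) ∧
        (∀ v : X, Finsupp.mapDomain (fun x => Finsupp.single x (1 : S)) (b v) =
          Finsupp.mapDomain (⇑b) (b v))) ∧
    (∀ b : X →ₗ[S] (X →₀ S),
      (∀ v : X, (b v).sum (fun x r => r • x) = v) →
      (∀ v : X, Finsupp.mapDomain (fun x => Finsupp.single x (1 : S)) (b v) =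
        Finsupp.mapDomain (⇑b) (b v)) →
      LinearIndependent S ((↑) : {a : X // b a = Finsupp.single a 1} → X) ∧
      Submodule.span S {a : X | b a = Finsupp.single a 1} = ⊤) := by
  refine ⟨fun ι B => ?_, fun b hcounit hcoassoc => ?_⟩
  · obtain ⟨hcounit, hcoassoc⟩ := B.isFreeModuleCoalgebra_toCoalgebra
    exact ⟨B.toCoalgebra, B.toCoalgebra_apply, hcounit, hcoassoc⟩
  · have hb : IsFreeModuleCoalgebra b := ⟨hcounit, hcoassoc⟩
    exact ⟨linearIndependent_of_apply_eq_single_one b, hb.span_eq_top⟩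
end

section
/- Let D be the finite distribution monad on Sets, whose algebras are convex sets. For any coalgebra b : X → D(X) for the induced comonad D̄ on convex sets, the set X_b = {x ∈ X : b(x) = 1x} equals the set ∂X of extreme points of X. -/
open scoped NNReal

/-- The finite (discrete probability) distribution monad on `Sets`:
finitely supported functions to `ℝ≥0` summing to `1`. -/
def FinDist (X : Type u) : Type u :=
  {φ : X →₀ ℝ≥0 // φ.sum (fun _ r => r) = 1}

/-- Unit of the distribution monad: the Dirac distribution `1·x`. -/
noncomputable def FinDist.pure {X : Type u} (x : X) : FinDist X :=
  ⟨Finsupp.single x 1, by simp⟩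

/-- Functorial action of the distribution monad. -/
noncomputable def FinDist.map {X Y : Type u} (f : X → Y) (φ : FinDist X) : FinDist Y :=
  ⟨Finsupp.mapDomain f φ.1, by
    rw [Finsupp.sum_mapDomain_index (fun _ => rfl) (fun _ _ _ => rfl)]
    exact φ.2⟩

/-- Multiplication of the distribution monad: flattening of a distribution of
distributions. -/
noncomputable def FinDist.join {X : Type u} (Φ : FinDist (FinDist X)) : FinDist X :=
  ⟨Φ.1.sum (fun φ r => r • φ.1), by
    rw [Finsupp.sum_sum_index (fun _ => rfl) (fun _ _ _ => rfl)]
    have h2 : ∀ (φ : FinDist X) (r : ℝ≥0), (r • φ.1).sum (fun _ s => s) = r := by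
      intro φ r
      rw [Finsupp.sum_smul_index (fun _ => rfl), ← Finsupp.mul_sum, φ.2, mul_one]
    simp only [h2]
    exact Φ.2⟩

/-!
If `b x = 1·x` and `a φ = x`, affineness of `b` gives `1·x = b (a φ) = Σ φ(y) • b y`.
A Dirac distribution is extreme in `D(X)`, so `b y = 1·x` for every `y` in the support
of `φ`, and the counit law gives `y = a (b y) = a (1·x) = x`; hence `φ = 1·x`.
Conversely, the counit law `a (b x) = x` makes an extreme `x` satisfy `b x = 1·x`.
-/

namespace FinDist

variable {X Y : Type u}

theorem eq_pure_of_forall_ne {φ : FinDist X} {x : X} (h : ∀ z, z ≠ x → φ.1 z = 0) :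
    φ = pure x := by
  have hφ : φ.1 = Finsupp.single x (φ.1 x) := by
    ext z
    by_cases hz : z = x
    · subst hz; simp
    · rw [h z hz, Finsupp.single_eq_of_ne' (Ne.symm hz)]
  have hmass := φ.2
  rw [hφ, Finsupp.sum_single_index rfl] at hmass
  exact Subtype.ext (hφ.trans (by rw [hmass]; rfl))

theorem join_map_val (f : X → FinDist Y) (φ : FinDist X) :
    (join (map f φ)).1 = φ.1.sum (fun y r => r • (f y).1) :=
  show (Finsupp.mapDomain f φ.1).sum (fun ψ r => r • ψ.1) = _ from
  Finsupp.sum_mapDomain_index (fun ψ : FinDist Y => zero_smul ℝ≥0 ψ.1)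
    (fun (ψ : FinDist Y) (r s : ℝ≥0) => add_smul r s ψ.1)

theorem eq_pure_of_join_map_eq_pure {f : X → FinDist Y} {φ : FinDist X} {x : Y}
    (h : join (map f φ) = pure x) {y : X} (hy : y ∈ φ.1.support) : f y = pure x := by
  refine eq_pure_of_forall_ne fun z hz => ?_
  have hsum : (φ.1.sum fun y r => r • (f y).1) z = 0 := by
    rw [← join_map_val, h]
    exact Finsupp.single_eq_of_ne' (Ne.symm hz)
  rw [Finsupp.sum_apply] at hsum
  have hterm : φ.1 y * (f y).1 z = 0 := by
    simpa using Finset.sum_eq_zero_iff.mp hsum y hy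
  exact (mul_eq_zero.mp hterm).resolve_left (Finsupp.mem_support_iff.mp hy)

end FinDist

theorem bases_as_coalgebras_stmt8_general {X : Type u}
    (a : FinDist X → X)
    (ha_unit : ∀ x : X, a (FinDist.pure x) = x)
    (b : X → FinDist X)
    (hb_affine : ∀ φ : FinDist X, b (a φ) = FinDist.join (FinDist.map b φ))
    (hb_counit : ∀ x : X, a (b x) = x) :
    {x : X | b x = FinDist.pure x} =
      {x : X | ∀ φ : FinDist X, a φ = x → φ = FinDist.pure x} := by
  ext x
  refine ⟨fun hx φ hφ => ?_, fun hx => hx (b x) (hb_counit x)⟩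
  have hjoin : FinDist.join (FinDist.map b φ) = FinDist.pure x := by
    rw [← hb_affine, hφ]
    exact hx
  refine FinDist.eq_pure_of_forall_ne fun z hzx => ?_
  by_contra hz
  have hbz := FinDist.eq_pure_of_join_map_eq_pure hjoin (Finsupp.mem_support_iff.mpr hz)
  exact hzx (by rw [← hb_counit z, hbz, ha_unit])

/-- For an algebra `a : D(X) → X` of the distribution monad (a convex set) and a
coalgebra `b : X → D(X)` for the induced comonad on convex sets, the set
`X_b = {x | b x = 1·x}` equals the set of extreme points of `X` (where `x` is extreme
iff it admits no non-trivial representation as a convex combination). -/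
theorem bases_as_coalgebras_stmt8 {X : Type u}
    (a : FinDist X → X)
    (ha_unit : ∀ x : X, a (FinDist.pure x) = x)
    (ha_assoc : ∀ Φ : FinDist (FinDist X), a (FinDist.join Φ) = a (FinDist.map a Φ))
    (b : X → FinDist X)
    (hb_affine : ∀ φ : FinDist X, b (a φ) = FinDist.join (FinDist.map b φ))
    (hb_counit : ∀ x : X, a (b x) = x)
    (hb_coassoc : ∀ x : X,
      FinDist.map FinDist.pure (b x) = FinDist.map b (b x)) :
    {x : X | b x = FinDist.pure x} =
      {x : X | ∀ φ : FinDist X, a φ = x → φ = FinDist.pure x} :=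
  bases_as_coalgebras_stmt8_general a ha_unit b hb_affine hb_counit
end

section
/- If a convex set X carries a coalgebra b : X → D(X) for the induced comonad on convex sets, then the restricted map b' : X → D(∂X) is an isomorphism of convex sets; that is, every convex set with a basis is free on its set of extreme points. -/
/-!
Coassociativity puts `b y` in the support of `map pure (b x)` for every `y` in the support of
`b x`, so `b y = pure y`. Such a `y` is extreme: if `a φ = y`, affinity of `b` gives
`join (map b φ) = pure y`, so `b w = pure y` and hence `w = a (b w) = y` for every `w` in the
support of `φ`. Thus `b` corestricts to `b' : X → D(∂X)`. It is injective by the counit law and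
affine because `b` is; it is surjective because `b` is the unit on extreme points, which makes
`b' (a Φ) = Φ`.
-/

open scoped NNReal

namespace FinDist

variable {X Y Z : Type u}

theorem map_map (g : Y → Z) (f : X → Y) (φ : FinDist X) :
    map g (map f φ) = map (g ∘ f) φ :=
  Subtype.ext Finsupp.mapDomain_comp.symm

theorem map_injective {f : X → Y} (hf : Function.Injective f) :
    Function.Injective (map (X := X) f) := fun _ _ h =>
  Subtype.ext (Finsupp.mapDomain_injective hf (congrArg Subtype.val h))

theorem support_map [DecidableEq Y] (f : X → Y) (φ : FinDist X) :
    (map f φ).1.support = φ.1.support.image f :=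
  Finsupp.mapDomain_support_of_subsingletonAddUnits f φ.1

theorem support_pure (x : X) : (pure x).1.support = {x} :=
  Finsupp.support_single (a := x) one_ne_zero

theorem eq_pure_of_support_subset {φ : FinDist X} {y : X}
    (h : φ.1.support ⊆ {y}) : φ = pure y := by
  have hφ : φ.1 = Finsupp.single y (φ.1 y) := Finsupp.support_subset_singleton.mp h
  have hy : φ.1 y = 1 := by
    have hsum := φ.2
    rwa [hφ, Finsupp.sum_single_index rfl] at hsum
  exact Subtype.ext (by rw [hφ, hy]; rfl)

theorem join_map_pure (φ : FinDist X) : join (map pure φ) = φ := by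
  apply Subtype.ext
  show (Finsupp.mapDomain pure φ.1).sum (fun ψ r => r • ψ.1) = φ.1
  rw [Finsupp.sum_mapDomain_index (fun ψ => zero_smul _ ψ.1) (fun ψ r s => add_smul r s ψ.1)]
  have smul_pure : ∀ (x : X) (r : ℝ≥0), r • (pure x).1 = Finsupp.single x r := fun x r => by
    rw [pure, Finsupp.smul_single, smul_eq_mul, mul_one]
  simp only [smul_pure]
  exact Finsupp.sum_single φ.1

theorem map_join (f : X → Y) (Φ : FinDist (FinDist X)) :
    map f (join Φ) = join (map (map f) Φ) := by
  apply Subtype.ext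
  show Finsupp.mapDomain f (Φ.1.sum fun ψ r => r • ψ.1)
      = (Finsupp.mapDomain (map f) Φ.1).sum (fun ψ r => r • ψ.1)
  rw [Finsupp.sum_mapDomain_index (fun ψ => zero_smul _ ψ.1) (fun ψ r s => add_smul r s ψ.1),
    ← Finsupp.mapDomain.addMonoidHom_apply, map_finsuppSum]
  exact Finsupp.sum_congr fun ψ _ => Finsupp.mapDomain_smul _ _

theorem mem_support_join {Φ : FinDist (FinDist X)} {ψ : FinDist X} {z : X}
    (hψ : ψ ∈ Φ.1.support) (hz : z ∈ ψ.1.support) : z ∈ (join Φ).1.support := by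
  have hle : Φ.1 ψ * ψ.1 z ≤ (join Φ).1 z := by
    show _ ≤ (Φ.1.sum fun φ r => r • φ.1) z
    rw [Finsupp.sum_apply, Finsupp.sum]
    exact Finset.single_le_sum (f := fun φ => (Φ.1 φ • φ.1) z) (fun _ _ => zero_le) hψ
  rw [Finsupp.mem_support_iff] at hψ hz ⊢
  exact (pos_iff_ne_zero.mpr (mul_ne_zero hψ hz)).trans_le hle |>.ne'

theorem eq_pure_of_join_eq_pure {Φ : FinDist (FinDist X)} {y : X} (h : join Φ = pure y)
    {ψ : FinDist X} (hψ : ψ ∈ Φ.1.support) : ψ = pure y :=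
  eq_pure_of_support_subset fun _ hz => support_pure y ▸ h ▸ mem_support_join hψ hz

noncomputable def restrict (p : X → Prop) (φ : FinDist X) (h : ∀ x ∈ φ.1.support, p x) :
    FinDist {x // p x} :=
  ⟨φ.1.subtypeDomain p, by
    rw [Finsupp.sum_subtypeDomain_index (h := fun _ r => r) h]
    exact φ.2⟩

theorem map_val_restrict (p : X → Prop) (φ : FinDist X) (h : ∀ x ∈ φ.1.support, p x) :
    map Subtype.val (restrict p φ h) = φ := by
  refine Subtype.ext (Finsupp.ext fun z => ?_)
  show Finsupp.mapDomain Subtype.val (φ.1.subtypeDomain p) z = φ.1 z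
  by_cases hz : p z
  · exact Finsupp.mapDomain_apply Subtype.val_injective _ (⟨z, hz⟩ : {x // p x})
  · rw [Finsupp.mapDomain_of_notMem_range _ _ (by rintro ⟨⟨w, hw⟩, rfl⟩; exact hz hw)]
    exact (Finsupp.notMem_support_iff.mp fun hz' => hz (h z hz')).symm

section Coalgebra

variable (a : FinDist X → X) (b : X → FinDist X)

/-- `∂X`: the points of the convex set `(X, a)` whose only decomposition is the trivial one. -/
abbrev IsExtremePoint (x : X) : Prop := ∀ φ : FinDist X, a φ = x → φ = pure x

variable {a b}

theorem isExtremePoint_of_eq_pure (ha_unit : ∀ x, a (pure x) = x)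
    (hb_affine : ∀ φ, b (a φ) = join (map b φ)) (hb_counit : ∀ x, a (b x) = x)
    {y : X} (hy : b y = pure y) : IsExtremePoint a y := by
  intro φ hφ
  have hjoin : join (map b φ) = pure y := by rw [← hb_affine, hφ, hy]
  refine eq_pure_of_support_subset fun w hw => Finset.mem_singleton.mpr ?_
  classical
  have hbw : b w = pure y :=
    eq_pure_of_join_eq_pure hjoin (support_map b φ ▸ Finset.mem_image_of_mem b hw)
  rw [← hb_counit w, hbw, ha_unit]

theorem eq_pure_of_mem_support (ha_unit : ∀ x, a (pure x) = x) (hb_counit : ∀ x, a (b x) = x)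
    (hb_coassoc : ∀ x, map pure (b x) = map b (b x)) {x y : X} (hy : y ∈ (b x).1.support) :
    b y = pure y := by
  classical
  have hby : b y ∈ (map pure (b x)).1.support := by
    rw [hb_coassoc, support_map]
    exact Finset.mem_image_of_mem b hy
  obtain ⟨w, -, hw⟩ := Finset.mem_image.mp (support_map pure (b x) ▸ hby)
  have hwy : w = y := by rw [← ha_unit w, hw, hb_counit]
  rw [← hw, hwy]

theorem eq_pure_of_isExtremePoint (hb_counit : ∀ x, a (b x) = x) {x : X}
    (hx : IsExtremePoint a x) : b x = pure x :=
  hx (b x) (hb_counit x)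

end Coalgebra

end FinDist

theorem bases_as_coalgebras_stmt9_general {X : Type u}
    (a : FinDist X → X)
    (ha_unit : ∀ x : X, a (FinDist.pure x) = x)
    (b : X → FinDist X)
    (hb_affine : ∀ φ : FinDist X, b (a φ) = FinDist.join (FinDist.map b φ))
    (hb_counit : ∀ x : X, a (b x) = x)
    (hb_coassoc : ∀ x : X,
      FinDist.map FinDist.pure (b x) = FinDist.map b (b x)) :
    ∃ b' : X → FinDist {x : X // ∀ φ : FinDist X, a φ = x → φ = FinDist.pure x},
      -- `b'` is the corestriction of `b` to the extreme points
      (∀ x : X, FinDist.map Subtype.val (b' x) = b x) ∧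
      -- `b'` is an isomorphism of convex sets: a bijective affine map
      Function.Bijective b' ∧
      (∀ φ : FinDist X, b' (a φ) = FinDist.join (FinDist.map b' φ)) := by
  let b' (x : X) : FinDist {x // FinDist.IsExtremePoint a x} :=
    FinDist.restrict _ (b x) fun _ hy => FinDist.isExtremePoint_of_eq_pure ha_unit hb_affine
      hb_counit (FinDist.eq_pure_of_mem_support ha_unit hb_counit hb_coassoc hy)
  have hb' (x : X) : FinDist.map Subtype.val (b' x) = b x := FinDist.map_val_restrict _ _ _
  have hb_extreme :
      b ∘ Subtype.val = FinDist.pure ∘ Subtype.val (p := FinDist.IsExtremePoint a) :=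
    funext fun e => FinDist.eq_pure_of_isExtremePoint hb_counit e.2
  have injective_map_val :=
    FinDist.map_injective (Subtype.val_injective (p := FinDist.IsExtremePoint a))
  refine ⟨b', hb', ⟨fun x y h => ?_, fun Φ => ⟨a (FinDist.map Subtype.val Φ), ?_⟩⟩,
    fun φ => ?_⟩
  · rw [← hb_counit x, ← hb_counit y, ← hb' x, ← hb' y, h]
  · apply injective_map_val
    rw [hb', hb_affine, FinDist.map_map, hb_extreme, ← FinDist.map_map, FinDist.join_map_pure]
  · apply injective_map_val
    rw [hb', hb_affine, FinDist.map_join, FinDist.map_map,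
      show FinDist.map Subtype.val ∘ b' = b from funext hb']

/-- If a convex set `X` (an algebra `a : D(X) → X` of the distribution monad) carries a
coalgebra `b : X → D(X)` for the induced comonad on convex sets, then the corestriction
`b' : X → D(∂X)` of `b` to the extreme points of `X` is an isomorphism of convex sets
(a bijective affine map); every convex set with a basis is free on its extreme points. -/
theorem bases_as_coalgebras_stmt9 {X : Type u}
    (a : FinDist X → X)
    (ha_unit : ∀ x : X, a (FinDist.pure x) = x)
    (ha_assoc : ∀ Φ : FinDist (FinDist X), a (FinDist.join Φ) = a (FinDist.map a Φ))
    (b : X → FinDist X)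
    (hb_affine : ∀ φ : FinDist X, b (a φ) = FinDist.join (FinDist.map b φ))
    (hb_counit : ∀ x : X, a (b x) = x)
    (hb_coassoc : ∀ x : X,
      FinDist.map FinDist.pure (b x) = FinDist.map b (b x)) :
    ∃ b' : X → FinDist {x : X // ∀ φ : FinDist X, a φ = x → φ = FinDist.pure x},
      -- `b'` is the corestriction of `b` to the extreme points
      (∀ x : X, FinDist.map Subtype.val (b' x) = b x) ∧
      -- `b'` is an isomorphism of convex sets: a bijective affine map
      Function.Bijective b' ∧
      (∀ φ : FinDist X, b' (a φ) = FinDist.join (FinDist.map b' φ)) :=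
  bases_as_coalgebras_stmt9_general a ha_unit b hb_affine hb_counit hb_coassoc
end

section
/- Let T be a Kock–Zöberlein monad on a poset-enriched category A (i.e., T is locally monotone and T(η_X) ≤ η_{TX}). For a map a : TX → X, the following are equivalent: (1) a is an Eilenberg–Moore algebra structure for T; (2) a is a left adjoint left inverse of the unit η_X : X → TX, i.e., a ∘ η_X = id and id_{TX} ≤ η_X ∘ a. -/
/-!
The Kock–Zöberlein inequality `T η_X ≤ η_{TX}` makes every left inverse `a` of `η_X` a left
adjoint of it: `𝟙 = T(η ≫ a) ≤ η ≫ T a = a ≫ η`. Applied to `μ_X`, a left inverse of `η_{TX}`,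
this gives `μ_X ⊣ η_{TX}`, whence `T a ≤ μ ≫ a ≫ η` and so `T a ≫ a ≤ μ ≫ a`. Conversely
`a ⊣ η_X` yields `μ_X ≤ T a`, and the two inequalities give the associativity law.
-/

open CategoryTheory

namespace CategoryTheory.Monad

variable {A : Type*} [Category A] [∀ X Y : A, PartialOrder (X ⟶ Y)]

theorem id_le_comp_unit_of_unit_comp_eq_id
    (comp_mono : ∀ {X Y Z : A} (f g : X ⟶ Y) (h k : Y ⟶ Z), f ≤ g → h ≤ k → f ≫ h ≤ g ≫ k)
    (T : Monad A) (KZ : ∀ X : A, T.map (T.η.app X) ≤ T.η.app (T.obj X))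
    {X : A} {a : T.obj X ⟶ X} (ha : T.η.app X ≫ a = 𝟙 X) :
    𝟙 (T.obj X) ≤ a ≫ T.η.app X :=
  calc 𝟙 (T.obj X) = T.map (T.η.app X) ≫ T.map a := by
          rw [← Functor.map_comp, ha]; exact (T.map_id X).symm
    _ ≤ T.η.app (T.obj X) ≫ T.map a := comp_mono _ _ _ _ (KZ X) le_rfl
    _ = a ≫ T.η.app X := (T.η.naturality a).symm

theorem map_le_mu_comp_comp_unit
    (comp_mono : ∀ {X Y Z : A} (f g : X ⟶ Y) (h k : Y ⟶ Z), f ≤ g → h ≤ k → f ≫ h ≤ g ≫ k)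
    (T : Monad A) (KZ : ∀ X : A, T.map (T.η.app X) ≤ T.η.app (T.obj X))
    {X : A} (a : T.obj X ⟶ X) :
    T.map a ≤ T.μ.app X ≫ a ≫ T.η.app X := by
  have mu_adj : 𝟙 (T.obj (T.obj X)) ≤ T.μ.app X ≫ T.η.app (T.obj X) :=
    id_le_comp_unit_of_unit_comp_eq_id comp_mono T KZ (T.left_unit X)
  calc T.map a = 𝟙 _ ≫ T.map a := (Category.id_comp _).symm
    _ ≤ (T.μ.app X ≫ T.η.app (T.obj X)) ≫ T.map a := comp_mono _ _ _ _ mu_adj le_rfl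
    _ = T.μ.app X ≫ a ≫ T.η.app X := by rw [Category.assoc, ← T.η.naturality a]; rfl

theorem mu_le_map_of_id_le_comp_unit
    (comp_mono : ∀ {X Y Z : A} (f g : X ⟶ Y) (h k : Y ⟶ Z), f ≤ g → h ≤ k → f ≫ h ≤ g ≫ k)
    (T : Monad A) (T_mono : ∀ {X Y : A} (f g : X ⟶ Y), f ≤ g → T.map f ≤ T.map g)
    {X : A} {a : T.obj X ⟶ X} (ha : 𝟙 (T.obj X) ≤ a ≫ T.η.app X) :
    T.μ.app X ≤ T.map a :=
  calc T.μ.app X = T.map (𝟙 (T.obj X)) ≫ T.μ.app X := by rw [T.map_id, Category.id_comp]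
    _ ≤ T.map (a ≫ T.η.app X) ≫ T.μ.app X := comp_mono _ _ _ _ (T_mono _ _ ha) le_rfl
    _ = T.map a := by
          rw [T.map_comp, Category.assoc, T.right_unit]; exact Category.comp_id _

end CategoryTheory.Monad

open CategoryTheory.Monad in
/-- For a Kock–Zöberlein monad `T` on a poset-enriched category `A` (homs are partially
ordered, composition is monotone, `T` is locally monotone, and `T(η_X) ≤ η_{TX}`),
a map `a : TX → X` is an Eilenberg–Moore algebra structure iff it is a
left-adjoint-left-inverse of the unit `η_X : X → TX`, i.e. `a ∘ η_X = id` and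
`id_{TX} ≤ η_X ∘ a`. -/
theorem bases_as_coalgebras_stmt10 {A : Type u} [Category.{v} A]
    [∀ X Y : A, PartialOrder (X ⟶ Y)]
    (comp_mono : ∀ {X Y Z : A} (f g : X ⟶ Y) (h k : Y ⟶ Z),
      f ≤ g → h ≤ k → f ≫ h ≤ g ≫ k)
    (T : Monad A)
    (T_mono : ∀ {X Y : A} (f g : X ⟶ Y), f ≤ g → T.map f ≤ T.map g)
    (KZ : ∀ X : A, T.map (T.η.app X) ≤ T.η.app (T.obj X))
    (X : A) (a : T.obj X ⟶ X) :
    (T.η.app X ≫ a = 𝟙 X ∧ T.map a ≫ a = T.μ.app X ≫ a) ↔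
    (T.η.app X ≫ a = 𝟙 X ∧ 𝟙 (T.obj X) ≤ a ≫ T.η.app X) := by
  refine ⟨fun ⟨unit, _⟩ => ⟨unit, id_le_comp_unit_of_unit_comp_eq_id comp_mono T KZ unit⟩,
    fun ⟨unit, adj⟩ => ⟨unit, le_antisymm ?_ ?_⟩⟩
  · calc T.map a ≫ a ≤ (T.μ.app X ≫ a ≫ T.η.app X) ≫ a :=
          comp_mono _ _ _ _ (map_le_mu_comp_comp_unit comp_mono T KZ a) le_rfl
      _ = T.μ.app X ≫ a := by simp only [Category.assoc, unit, Category.comp_id]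
  · exact comp_mono _ _ _ _ (mu_le_map_of_id_le_comp_unit comp_mono T T_mono adj) le_rfl
end

section
/- Let T be a Kock–Zöberlein monad on a poset-enriched category A, with induced comonad T̄ on Alg(T). Given an algebra a : TX → X and an algebra morphism c : a → T̄(a) (i.e., c : X → TX with c ∘ a = μ ∘ T(c)), the following are equivalent: (1) c is an Eilenberg–Moore coalgebra for T̄ (a ∘ c = id and T(η) ∘ c = T(c) ∘ c); (2) c is a left adjoint right inverse of the counit a, i.e., a ∘ c = id and c ∘ a ≤ id. -/
/-!
In a Kock–Zöberlein monad every algebra structure `a : TX ⟶ X` is left adjoint to the unit: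
`η_X ≫ a = 𝟙` and `𝟙 ≤ a ≫ η_X`; applying `T` and `Tη ≤ ηT` once more gives `μ_X ≤ T a` and
`μ_X ≫ T η_X ≤ 𝟙`. Now let `c` be a morphism of algebras `a ⟶ μ_X` which is a section of `a`.
Then `a ≫ c = T c ≫ μ_X ≤ T c ≫ T a = 𝟙`, and `c ≤ c ≫ a ≫ η_X = η_X` yields
`c ≫ T c ≤ c ≫ T η_X = c ≫ T c ≫ μ_X ≫ T η_X ≤ c ≫ T c`. So each of the two conditions is
equivalent to `c ≫ a = 𝟙` alone.
-/

open CategoryTheory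

namespace KockZoeberlein

variable {A : Type u} [Category.{v} A] [∀ X Y : A, PartialOrder (X ⟶ Y)]

variable (A) in
def CompMonotone : Prop :=
  ∀ {X Y Z : A} (f g : X ⟶ Y) (h k : Y ⟶ Z), f ≤ g → h ≤ k → f ≫ h ≤ g ≫ k

def MapMonotone (T : Monad A) : Prop :=
  ∀ {X Y : A} (f g : X ⟶ Y), f ≤ g → T.map f ≤ T.map g

def MapUnitLeUnit (T : Monad A) : Prop :=
  ∀ X : A, T.map (T.η.app X) ≤ T.η.app (T.obj X)

variable {T : Monad A} {X : A} {a : T.obj X ⟶ X}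

theorem id_le_comp_unit (comp_mono : CompMonotone A) (KZ : MapUnitLeUnit T)
    (ha : T.η.app X ≫ a = 𝟙 X) : 𝟙 (T.obj X) ≤ a ≫ T.η.app X :=
  calc 𝟙 (T.obj X) = T.map (T.η.app X) ≫ T.map a := by
        rw [← T.map_comp, ha]; exact (T.map_id X).symm
    _ ≤ T.η.app (T.obj X) ≫ T.map a := comp_mono _ _ _ _ (KZ X) le_rfl
    _ = a ≫ T.η.app X := (T.η.naturality a).symm

theorem mu_comp_map_unit_le_id (comp_mono : CompMonotone A) (T_mono : MapMonotone T)
    (KZ : MapUnitLeUnit T) (X : A) : T.μ.app X ≫ T.map (T.η.app X) ≤ 𝟙 (T.obj (T.obj X)) :=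
  calc T.μ.app X ≫ T.map (T.η.app X) = T.map (T.map (T.η.app X)) ≫ T.μ.app (T.obj X) :=
        (T.μ.naturality (T.η.app X)).symm
    _ ≤ T.map (T.η.app (T.obj X)) ≫ T.μ.app (T.obj X) :=
        comp_mono _ _ _ _ (T_mono _ _ (KZ X)) le_rfl
    _ = 𝟙 _ := T.right_unit (T.obj X)

theorem mu_le_map (comp_mono : CompMonotone A) (T_mono : MapMonotone T) (KZ : MapUnitLeUnit T)
    (ha : T.η.app X ≫ a = 𝟙 X) : T.μ.app X ≤ T.map a := by
  have unit_le : 𝟙 (T.obj (T.obj X)) ≤ T.map a ≫ T.η.app (T.obj X) :=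
    calc 𝟙 (T.obj (T.obj X)) = T.map (𝟙 (T.obj X)) := (T.map_id _).symm
      _ ≤ T.map (a ≫ T.η.app X) := T_mono _ _ (id_le_comp_unit comp_mono KZ ha)
      _ = T.map a ≫ T.map (T.η.app X) := T.map_comp _ _
      _ ≤ T.map a ≫ T.η.app (T.obj X) := comp_mono _ _ _ _ le_rfl (KZ X)
  calc T.μ.app X = 𝟙 _ ≫ T.μ.app X := (Category.id_comp _).symm
    _ ≤ (T.map a ≫ T.η.app (T.obj X)) ≫ T.μ.app X := comp_mono _ _ _ _ unit_le le_rfl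
    _ = T.map a := by rw [Category.assoc, T.left_unit]; exact Category.comp_id _

theorem le_unit_of_comp_eq_id (comp_mono : CompMonotone A) (KZ : MapUnitLeUnit T)
    (ha : T.η.app X ≫ a = 𝟙 X) {c : X ⟶ T.obj X} (hca : c ≫ a = 𝟙 X) : c ≤ T.η.app X :=
  calc c = c ≫ 𝟙 (T.obj X) := (Category.comp_id _).symm
    _ ≤ c ≫ a ≫ T.η.app X := comp_mono _ _ _ _ le_rfl (id_le_comp_unit comp_mono KZ ha)
    _ = T.η.app X := by rw [← Category.assoc, hca, Category.id_comp]

variable {c : X ⟶ T.obj X}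

theorem comp_le_id_of_comp_eq_id (comp_mono : CompMonotone A) (T_mono : MapMonotone T)
    (KZ : MapUnitLeUnit T) (ha : T.η.app X ≫ a = 𝟙 X) (hc : a ≫ c = T.map c ≫ T.μ.app X)
    (hca : c ≫ a = 𝟙 X) : a ≫ c ≤ 𝟙 (T.obj X) :=
  calc a ≫ c = T.map c ≫ T.μ.app X := hc
    _ ≤ T.map c ≫ T.map a := comp_mono _ _ _ _ le_rfl (mu_le_map comp_mono T_mono KZ ha)
    _ = 𝟙 _ := by rw [← T.map_comp, hca, T.map_id]

theorem comp_map_unit_eq_of_comp_eq_id (comp_mono : CompMonotone A) (T_mono : MapMonotone T)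
    (KZ : MapUnitLeUnit T) (ha : T.η.app X ≫ a = 𝟙 X) (hc : a ≫ c = T.map c ≫ T.μ.app X)
    (hca : c ≫ a = 𝟙 X) : c ≫ T.map (T.η.app X) = c ≫ T.map c := by
  apply le_antisymm
  · calc c ≫ T.map (T.η.app X) = c ≫ (a ≫ c) ≫ T.map (T.η.app X) := by
          rw [← Category.assoc, ← Category.assoc, hca, Category.id_comp]
      _ = c ≫ T.map c ≫ T.μ.app X ≫ T.map (T.η.app X) := by
          rw [hc, Category.assoc]
      _ ≤ c ≫ T.map c ≫ 𝟙 _ := comp_mono _ _ _ _ le_rfl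
          (comp_mono _ _ _ _ le_rfl (mu_comp_map_unit_le_id comp_mono T_mono KZ X))
      _ = c ≫ T.map c := by rw [Category.comp_id]
  · exact comp_mono _ _ _ _ le_rfl (T_mono _ _ (le_unit_of_comp_eq_id comp_mono KZ ha hca))

end KockZoeberlein

open KockZoeberlein in
/-- Let `T` be a Kock–Zöberlein monad on a poset-enriched category, with induced comonad
`T̄` on `Alg(T)`. Given an algebra `a : TX → X` and a morphism of algebras
`c : a → T̄(a)` (a map `c : X → TX` with `c ∘ a = μ ∘ T(c)`), the following are
equivalent: (1) `c` is an Eilenberg–Moore coalgebra for `T̄`, i.e. `a ∘ c = id` and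
`T(η) ∘ c = T(c) ∘ c`; (2) `c` is a left-adjoint-right-inverse of the counit `a`,
i.e. `a ∘ c = id` and `c ∘ a ≤ id`. -/
theorem bases_as_coalgebras_stmt12 {A : Type u} [Category.{v} A]
    [∀ X Y : A, PartialOrder (X ⟶ Y)]
    (comp_mono : ∀ {X Y Z : A} (f g : X ⟶ Y) (h k : Y ⟶ Z),
      f ≤ g → h ≤ k → f ≫ h ≤ g ≫ k)
    (T : Monad A)
    (T_mono : ∀ {X Y : A} (f g : X ⟶ Y), f ≤ g → T.map f ≤ T.map g)
    (KZ : ∀ X : A, T.map (T.η.app X) ≤ T.η.app (T.obj X))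
    (X : A) (a : T.obj X ⟶ X)
    (ha1 : T.η.app X ≫ a = 𝟙 X)
    (ha2 : T.map a ≫ a = T.μ.app X ≫ a)
    (c : X ⟶ T.obj X)
    (hc : a ≫ c = T.map c ≫ T.μ.app X) :
    (c ≫ a = 𝟙 X ∧ c ≫ T.map (T.η.app X) = c ≫ T.map c) ↔
    (c ≫ a = 𝟙 X ∧ a ≫ c ≤ 𝟙 (T.obj X)) :=
  and_congr_right fun hca =>
    iff_of_true (comp_map_unit_eq_of_comp_eq_id comp_mono T_mono KZ ha1 hc hca)
      (comp_le_id_of_comp_eq_id comp_mono T_mono KZ ha1 hc hca)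
end

section
/- Let T be a Kock–Zöberlein monad on a poset-enriched category. Suppose on an object X there is a chain of adjunctions b ⊣ c ⊣ a ⊣ η_X, where a : TX → X is a T-algebra, c : X → TX is a T̄-coalgebra on a, and b : TX → X is a T̄̄-algebra on c. Let e : X_c → X be the equalizer of c and η_X, and let k : X → X_c be the splitting obtained as the factorization of b ∘ η_X through e. Then k ∘ e = id_{X_c}, and the transpose a ∘ T(e) : T(X_c) → X is an isomorphism of T-algebras with inverse T(k) ∘ c; hence X is a free T-algebra. -/
open CategoryTheory CategoryTheory.Limits

/-- For a Kock–Zöberlein monad `T`, suppose an object `X` carries a chain of adjunctions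
`b ⊣ c ⊣ a ⊣ η_X`, where `a : TX → X` is a `T`-algebra, `c : X → TX` is a
`T̄`-coalgebra on `a`, and `b : TX → X` is a `T̄̄`-algebra on `c`. Let `e : X_c → X` be
the equalizer of `c` and `η_X` and `k : X → X_c` the factorization of `b ∘ η` through
`e`. Then `k ∘ e = id`, and the transpose `a ∘ T(e) : T(X_c) → X` is an isomorphism of
`T`-algebras with inverse `T(k) ∘ c`; hence `X` is a free `T`-algebra. -/
theorem bases_as_coalgebras_stmt14 {A : Type u} [Category.{v} A]
    [∀ X Y : A, PartialOrder (X ⟶ Y)]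
    (comp_mono : ∀ {X Y Z : A} (f g : X ⟶ Y) (h k : Y ⟶ Z),
      f ≤ g → h ≤ k → f ≫ h ≤ g ≫ k)
    (T : Monad A)
    (T_mono : ∀ {X Y : A} (f g : X ⟶ Y), f ≤ g → T.map f ≤ T.map g)
    (KZ : ∀ Y : A, T.map (T.η.app Y) ≤ T.η.app (T.obj Y))
    (X : A)
    -- the algebra `a`, with `a ⊣ η_X`
    (a : T.obj X ⟶ X)
    (ha1 : T.η.app X ≫ a = 𝟙 X)
    (ha2 : T.map a ≫ a = T.μ.app X ≫ a)
    (ha3 : 𝟙 (T.obj X) ≤ a ≫ T.η.app X)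
    -- the coalgebra `c` on `a`, with `c ⊣ a`
    (c : X ⟶ T.obj X)
    (hc1 : a ≫ c = T.map c ≫ T.μ.app X)
    (hc2 : c ≫ a = 𝟙 X)
    (hc3 : c ≫ T.map (T.η.app X) = c ≫ T.map c)
    (hc4 : a ≫ c ≤ 𝟙 (T.obj X))
    -- the algebra `b` on `c`, with `b ⊣ c`
    (b : T.obj X ⟶ X)
    (hb1 : c ≫ b = 𝟙 X)
    (hb2 : T.map b ≫ b = T.map a ≫ b)
    (hb3 : T.map b ≫ a = T.μ.app X ≫ b)
    (hb4 : b ≫ c = T.map (T.η.app X) ≫ T.map b)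
    (hb5 : 𝟙 (T.obj X) ≤ b ≫ c)
    -- the equalizer `e : X_c → X` of `c` and `η_X`
    {E : A} (e : E ⟶ X)
    (he : e ≫ c = e ≫ T.η.app X)
    (hlim : IsLimit (Fork.ofι e he))
    -- the factorization `k` of `b ∘ η` through the equalizer `e`
    (k : X ⟶ E)
    (hk : k ≫ e = T.η.app X ≫ b) :
    -- `k ∘ e = id`
    (e ≫ k = 𝟙 E) ∧
    -- `a ∘ T(e)` is an isomorphism with inverse `T(k) ∘ c`
    ((c ≫ T.map k) ≫ (T.map e ≫ a) = 𝟙 X) ∧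
    ((T.map e ≫ a) ≫ (c ≫ T.map k) = 𝟙 (T.obj E)) ∧
    -- `a ∘ T(e)` is a morphism of `T`-algebras from the free algebra on `E`
    (T.map (T.map e ≫ a) ≫ a = T.μ.app E ≫ (T.map e ≫ a)) := by
  have mono_e : Mono e := by
    constructor
    intro Z f g h
    exact Fork.IsLimit.hom_ext hlim h
  have h1 : e ≫ k = 𝟙 E := by
    apply mono_e.right_cancellation
    rw [Category.assoc, hk, Category.id_comp, ← Category.assoc, ← he,
      Category.assoc, hb1, Category.comp_id]
  have hηnat : e ≫ T.η.app X = T.η.app E ≫ T.map e := by simpa using T.η.naturality e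
  have hμnat : T.map (T.map e) ≫ T.μ.app X = T.μ.app E ≫ T.map e := T.μ.naturality e
  have hμnatk : T.μ.app X ≫ T.map k = T.map (T.map k) ≫ T.μ.app E := (T.μ.naturality k).symm
  refine ⟨h1, ?_, ?_, ?_⟩
  · calc (c ≫ T.map k) ≫ T.map e ≫ a
        = c ≫ T.map (k ≫ e) ≫ a := by simp
      _ = c ≫ T.map (T.η.app X) ≫ T.map b ≫ a := by rw [hk]; simp
      _ = c ≫ T.map (T.η.app X) ≫ T.μ.app X ≫ b := by rw [hb3]
      _ = c ≫ (T.map (T.η.app X) ≫ T.μ.app X) ≫ b := by simp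
      _ = 𝟙 X := by rw [T.right_unit]; simp [hb1]
  · calc (T.map e ≫ a) ≫ c ≫ T.map k
        = T.map e ≫ (a ≫ c) ≫ T.map k := by simp
      _ = T.map e ≫ T.map c ≫ T.μ.app X ≫ T.map k := by rw [hc1]; simp
      _ = T.map e ≫ T.map c ≫ T.map (T.map k) ≫ T.μ.app E := by rw [hμnatk]
      _ = T.map (e ≫ c) ≫ T.map (T.map k) ≫ T.μ.app E := by simp
      _ = T.map (T.η.app E) ≫ T.map (T.map (e ≫ k)) ≫ T.μ.app E := by
          rw [he, hηnat]; simp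
      _ = 𝟙 (T.obj E) := by rw [h1]; simp
  · calc T.map (T.map e ≫ a) ≫ a
        = T.map (T.map e) ≫ T.map a ≫ a := by simp
      _ = (T.map (T.map e) ≫ T.μ.app X) ≫ a := by rw [ha2]; simp
      _ = T.μ.app E ≫ T.map e ≫ a := by rw [hμnat]; simp
end

section
/- Let T be a commutative monad on a cartesian category A such that Alg(T) is symmetric monoidal with the free functor strong monoidal (via ξ : TX ⊗ TY ≅ T(X × Y)). Every T̄-coalgebra b : X → TX on an algebra a : TX → X induces a commutative comonoid structure on X in Alg(T), with counit u_b = T(!) ∘ b : X → T(1) and comultiplication d_b = (a ⊗ a) ∘ ξ⁻¹ ∘ T(Δ) ∘ b : X → X ⊗ X. In particular (counit law): (u_b ⊗ id) ∘ d_b = λ⁻¹ : X → I ⊗ X. -/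
/-!
Since `F` is strong symmetric monoidal, `F(Δ)` and `F(!)` make every free algebra `FP` a
commutative comonoid, and `d_b`, `u_b` are this comonoid on `FX` restricted along `b` and
pushed forward along the counit `ε = a : FX → X`. The laws survive because, right after
`b ≫ F(Δ) ≫ ξ⁻¹`, the idempotent `ε ≫ b` may be inserted into or deleted from either tensor
factor: on carriers `⟨b, 1⟩ = b ≫ ⟨1, a⟩` (as `a ∘ b = 1`), the coalgebra law turns
`b ≫ T(b)` into `b ≫ T(η)`, and `η ≫ ⟨1, a⟩ = ⟨η, 1⟩`. The right counit law then follows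
from the left one by cocommutativity.
-/

open CategoryTheory CategoryTheory.Limits CategoryTheory.MonoidalCategory

namespace CategoryTheory.Monad

variable {A : Type u} [Category.{v} A] {T : Monad A}

/-- The counit of `T.free ⊣ T.forget`, retyped so that its domain is syntactically
`T.free.obj X.A`; `freeMu` does the same at a free algebra, where `rw` needs the domain
`T.free.obj (T.obj P)` rather than `T.free.obj (T.free.obj P).A`. -/
def Algebra.fromFree (X : T.Algebra) : T.free.obj X.A ⟶ X :=
  T.adj.counit.app X

def freeMu (P : A) : T.free.obj (T.obj P) ⟶ T.free.obj P :=
  (T.free.obj P).fromFree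

theorem free_map_η_comp_freeMu_assoc (P : A) {Y : T.Algebra} (f : T.free.obj P ⟶ Y) :
    T.free.map (T.η.app P) ≫ freeMu P ≫ f = f := by
  have h : T.free.map (T.η.app P) ≫ freeMu P = 𝟙 _ := by
    ext
    change T.map (T.η.app P) ≫ T.map (𝟙 _) ≫ T.μ.app P = 𝟙 _
    simp
  rw [← Category.assoc, h, Category.id_comp]

structure Basis (X : T.Algebra) where
  b : X.A ⟶ T.obj X.A
  map_b_comp_μ : T.map b ≫ T.μ.app X.A = X.a ≫ b
  b_comp_a : b ≫ X.a = 𝟙 X.A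
  b_comp_map_b : b ≫ T.map b = b ≫ T.map (T.η.app X.A)

namespace Basis

variable {X : T.Algebra} (B : Basis X)

def hom : X ⟶ T.free.obj X.A :=
  ⟨B.b, B.map_b_comp_μ⟩

theorem hom_comp_fromFree : B.hom ≫ X.fromFree = 𝟙 X := by
  ext
  change B.b ≫ T.map (𝟙 X.A) ≫ X.a = 𝟙 X.A
  simp [B.b_comp_a]

theorem fromFree_comp_hom_assoc {Y : T.Algebra} (f : T.free.obj X.A ⟶ Y) :
    X.fromFree ≫ B.hom ≫ f = T.free.map B.b ≫ freeMu X.A ≫ f := by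
  rw [← Category.assoc, ← Category.assoc]
  exact congrArg (· ≫ f) (T.adj.counit.naturality B.hom).symm

theorem hom_comp_free_map_b : B.hom ≫ T.free.map B.b = B.hom ≫ T.free.map (T.η.app X.A) := by
  ext
  exact B.b_comp_map_b

def ofCoalgebra (C : Comonad.Coalgebra T.adj.toComonad) : Basis C.A where
  b := C.a.f
  map_b_comp_μ := C.a.h
  b_comp_a := by
    have h := congrArg Algebra.Hom.f C.counit
    rw [Algebra.comp_f] at h
    simp only [Adjunction.toComonad_ε, adj_counit, Algebra.id_f] at h
    exact h
  b_comp_map_b := by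
    have h := congrArg Algebra.Hom.f C.coassoc
    rw [Algebra.comp_f, Algebra.comp_f] at h
    simp only [Adjunction.toComonad_δ, adj_unit] at h
    exact h.symm

end Basis

variable [HasFiniteProducts A]

section FreeComonoid

variable [MonoidalCategory T.Algebra]
  (ξ : ∀ P Q : A, T.free.obj P ⊗ T.free.obj Q ≅ T.free.obj (P ⨯ Q))
  (ι : 𝟙_ T.Algebra ≅ T.free.obj (⊤_ A))

noncomputable def freeComul (P : A) : T.free.obj P ⟶ T.free.obj P ⊗ T.free.obj P :=
  T.free.map (diag P) ≫ (ξ P P).inv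

noncomputable def freeCounit (P : A) : T.free.obj P ⟶ 𝟙_ T.Algebra :=
  T.free.map (terminal.from P) ≫ ι.inv

def FreeTensorNatural : Prop :=
  ∀ {P P' Q Q' : A} (f : P ⟶ P') (g : Q ⟶ Q'),
    (T.free.map f ⊗ₘ T.free.map g) ≫ (ξ P' Q').hom = (ξ P Q).hom ≫ T.free.map (prod.map f g)

def FreeTensorLeftUnital : Prop :=
  ∀ P : A, (ι.hom ⊗ₘ 𝟙 (T.free.obj P)) ≫ (ξ (⊤_ A) P).hom =
    (λ_ (T.free.obj P)).hom ≫ T.free.map (Limits.prod.leftUnitor P).inv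

def FreeTensorAssociative : Prop :=
  ∀ P Q R : A,
    ((ξ P Q).hom ⊗ₘ 𝟙 (T.free.obj R)) ≫ (ξ (P ⨯ Q) R).hom ≫
        T.free.map (Limits.prod.associator P Q R).hom =
      (α_ (T.free.obj P) (T.free.obj Q) (T.free.obj R)).hom ≫
        (𝟙 (T.free.obj P) ⊗ₘ (ξ Q R).hom) ≫ (ξ P (Q ⨯ R)).hom

def FreeTensorSymmetric [BraidedCategory T.Algebra] : Prop :=
  ∀ P Q : A, (β_ (T.free.obj P) (T.free.obj Q)).hom ≫ (ξ Q P).hom =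
    (ξ P Q).hom ≫ T.free.map (Limits.prod.braiding P Q).hom

variable {ξ ι}

theorem freeComul_tensorHom (hnat : FreeTensorNatural ξ) {P Q R : A} (f : P ⟶ Q) (g : P ⟶ R) :
    freeComul ξ P ≫ (T.free.map f ⊗ₘ T.free.map g) =
      T.free.map (prod.lift f g) ≫ (ξ Q R).inv := by
  rw [freeComul, Category.assoc, ← (CommSq.mk (hnat f g)).vert_inv.w, ← T.free.map_comp_assoc]
  simp

theorem freeComul_counit_left (hnat : FreeTensorNatural ξ)
    (hleft : FreeTensorLeftUnital ξ ι) (P : A) :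
    freeComul ξ P ≫ (freeCounit ι P ⊗ₘ 𝟙 _) = (λ_ _).inv := by
  have hlift : T.free.map (prod.lift (terminal.from P) (𝟙 P)) =
      (λ_ _).inv ≫ (ι.hom ⊗ₘ 𝟙 _) ≫ (ξ _ P).hom := by
    rw [hleft, Iso.inv_hom_id_assoc]
    simp
  calc freeComul ξ P ≫ (freeCounit ι P ⊗ₘ 𝟙 _)
      = (freeComul ξ P ≫ (T.free.map (terminal.from P) ⊗ₘ T.free.map (𝟙 P))) ≫
          (ι.inv ⊗ₘ 𝟙 _) := by
        rw [freeCounit, Category.assoc, tensorHom_comp_tensorHom, T.free.map_id,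
          Category.id_comp]
    _ = (λ_ _).inv := by
        rw [freeComul_tensorHom hnat, hlift]
        simp

theorem freeComul_coassoc (hnat : FreeTensorNatural ξ) (hassoc : FreeTensorAssociative ξ)
    (P : A) : freeComul ξ P ≫ (freeComul ξ P ⊗ₘ 𝟙 _) ≫ (α_ _ _ _).hom =
      freeComul ξ P ≫ (𝟙 _ ⊗ₘ freeComul ξ P) := by
  have hinv : (ξ (P ⨯ P) P).inv ≫ ((ξ P P).inv ⊗ₘ 𝟙 _) ≫ (α_ _ _ _).hom =
      T.free.map (Limits.prod.associator P P P).hom ≫ (ξ P (P ⨯ P)).inv ≫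
        (𝟙 _ ⊗ₘ (ξ P P).inv) := by
    rw [Iso.inv_comp_eq, ← cancel_epi ((ξ P P).hom ⊗ₘ 𝟙 _), reassoc_of% (hassoc P P P)]
    simp
  have hl : freeComul ξ P ⊗ₘ 𝟙 _ =
      (T.free.map (diag P) ⊗ₘ T.free.map (𝟙 P)) ≫ ((ξ P P).inv ⊗ₘ 𝟙 _) := by
    rw [freeComul, tensorHom_comp_tensorHom, T.free.map_id, Category.id_comp]
  have hr : 𝟙 _ ⊗ₘ freeComul ξ P =
      (T.free.map (𝟙 P) ⊗ₘ T.free.map (diag P)) ≫ (𝟙 _ ⊗ₘ (ξ P P).inv) := by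
    rw [freeComul, tensorHom_comp_tensorHom, T.free.map_id, Category.id_comp]
  have hdiag : prod.lift (diag P) (𝟙 P) ≫ (Limits.prod.associator P P P).hom =
      prod.lift (𝟙 P) (diag P) := by
    ext <;> simp [prod.lift_fst, prod.lift_snd, prod.lift_fst_assoc]
  rw [hl, hr, Category.assoc, reassoc_of% freeComul_tensorHom hnat,
    reassoc_of% freeComul_tensorHom hnat, hinv, ← T.free.map_comp_assoc, hdiag]

theorem freeComul_braiding [BraidedCategory T.Algebra] (hsymm : FreeTensorSymmetric ξ) (P : A) :
    freeComul ξ P ≫ (β_ _ _).hom = freeComul ξ P := by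
  have hdiag : diag P ≫ (Limits.prod.braiding P P).hom = diag P := by
    ext <;> simp [prod.lift_fst, prod.lift_snd]
  rw [freeComul, Category.assoc, ← (CommSq.mk (hsymm P P)).vert_inv.w,
    ← T.free.map_comp_assoc, hdiag]

end FreeComonoid

namespace Basis

variable [MonoidalCategory T.Algebra]
  (ξ : ∀ P Q : A, T.free.obj P ⊗ T.free.obj Q ≅ T.free.obj (P ⨯ Q))
  (ι : 𝟙_ T.Algebra ≅ T.free.obj (⊤_ A)) {X : T.Algebra} (B : Basis X)

noncomputable def comul : X ⟶ X ⊗ X :=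
  B.hom ≫ T.free.map (diag X.A) ≫ (ξ X.A X.A).inv ≫ (X.fromFree ⊗ₘ X.fromFree)

noncomputable def counit : X ⟶ 𝟙_ T.Algebra :=
  B.hom ≫ T.free.map (terminal.from X.A) ≫ ι.inv

variable {ξ ι B}

theorem comul_eq : B.comul ξ = B.hom ≫ freeComul ξ X.A ≫ (X.fromFree ⊗ₘ X.fromFree) := by
  simp only [comul, freeComul, Category.assoc]

theorem counit_eq : B.counit ι = B.hom ≫ freeCounit ι X.A := by
  rw [counit, freeCounit]

theorem hom_freeComul_absorb_left (hnat : FreeTensorNatural ξ)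
    {Y Z : T.Algebra} (f : T.free.obj X.A ⟶ Y) (g : T.free.obj X.A ⟶ Z) :
    B.hom ≫ freeComul ξ X.A ≫ ((X.fromFree ≫ B.hom ≫ f) ⊗ₘ g) =
      B.hom ≫ freeComul ξ X.A ≫ (f ⊗ₘ g) := by
  have hlift_b : prod.lift B.b (𝟙 X.A) = B.b ≫ prod.lift (𝟙 _) X.a := by
    ext <;> simp [B.b_comp_a]
  have hlift_η : T.η.app X.A ≫ prod.lift (𝟙 _) X.a = prod.lift (T.η.app X.A) (𝟙 X.A) := by
    ext <;> simp [Algebra.unit]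
  have hsplit : ∀ s : X.A ⟶ T.obj X.A, B.hom ≫ freeComul ξ X.A ≫
      ((T.free.map s ≫ freeMu X.A ≫ f) ⊗ₘ g) =
      B.hom ≫ T.free.map (prod.lift s (𝟙 X.A)) ≫ (ξ _ _).inv ≫ ((freeMu X.A ≫ f) ⊗ₘ g) := by
    intro s
    rw [← reassoc_of% freeComul_tensorHom hnat, tensorHom_comp_tensorHom, T.free.map_id,
      Category.id_comp]
  calc B.hom ≫ freeComul ξ X.A ≫ ((X.fromFree ≫ B.hom ≫ f) ⊗ₘ g)
      = B.hom ≫ T.free.map B.b ≫ T.free.map (prod.lift (𝟙 _) X.a) ≫ (ξ _ _).inv ≫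
          ((freeMu X.A ≫ f) ⊗ₘ g) := by
        rw [B.fromFree_comp_hom_assoc, hsplit, hlift_b, T.free.map_comp, Category.assoc]
    _ = B.hom ≫ freeComul ξ X.A ≫ ((T.free.map (T.η.app X.A) ≫ freeMu X.A ≫ f) ⊗ₘ g) := by
        rw [reassoc_of% B.hom_comp_free_map_b, hsplit, ← T.free.map_comp_assoc, hlift_η]
    _ = B.hom ≫ freeComul ξ X.A ≫ (f ⊗ₘ g) := by
        rw [free_map_η_comp_freeMu_assoc]

theorem hom_freeComul_absorb_right [BraidedCategory T.Algebra] (hnat : FreeTensorNatural ξ)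
    (hsymm : FreeTensorSymmetric ξ)
    {Y Z : T.Algebra} (f : T.free.obj X.A ⟶ Y) (g : T.free.obj X.A ⟶ Z) :
    B.hom ≫ freeComul ξ X.A ≫ (g ⊗ₘ (X.fromFree ≫ B.hom ≫ f)) =
      B.hom ≫ freeComul ξ X.A ≫ (g ⊗ₘ f) := by
  have hswap : ∀ {Y Z : T.Algebra} (p : T.free.obj X.A ⟶ Y) (q : T.free.obj X.A ⟶ Z),
      freeComul ξ X.A ≫ (p ⊗ₘ q) = freeComul ξ X.A ≫ (q ⊗ₘ p) ≫ (β_ _ _).hom := by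
    intro Y Z p q
    rw [BraidedCategory.braiding_naturality, reassoc_of% freeComul_braiding hsymm]
  rw [hswap, reassoc_of% hom_freeComul_absorb_left hnat, ← hswap]

theorem comul_counit_left (hnat : FreeTensorNatural ξ) (hleft : FreeTensorLeftUnital ξ ι) :
    B.comul ξ ≫ (B.counit ι ⊗ₘ 𝟙 X) = (λ_ X).inv :=
  calc B.comul ξ ≫ (B.counit ι ⊗ₘ 𝟙 X)
      = B.hom ≫ freeComul ξ X.A ≫
          ((X.fromFree ≫ B.hom ≫ freeCounit ι X.A) ⊗ₘ X.fromFree) := by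
        rw [comul_eq, counit_eq, Category.assoc, Category.assoc, tensorHom_comp_tensorHom,
          Category.comp_id]
    _ = B.hom ≫ (freeComul ξ X.A ≫ (freeCounit ι X.A ⊗ₘ 𝟙 _)) ≫ (𝟙 _ ⊗ₘ X.fromFree) := by
        rw [hom_freeComul_absorb_left hnat, Category.assoc, tensorHom_comp_tensorHom,
          Category.comp_id, Category.id_comp]
    _ = B.hom ≫ X.fromFree ≫ (λ_ X).inv := by
        rw [freeComul_counit_left hnat hleft, id_tensorHom,
          ← leftUnitor_inv_naturality]
    _ = (λ_ X).inv := by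
        rw [← Category.assoc, hom_comp_fromFree, Category.id_comp]

theorem comul_braiding [BraidedCategory T.Algebra] (hsymm : FreeTensorSymmetric ξ) :
    B.comul ξ ≫ (β_ X X).hom = B.comul ξ := by
  rw [comul_eq, Category.assoc, Category.assoc, BraidedCategory.braiding_naturality,
    reassoc_of% freeComul_braiding hsymm]

theorem comul_counit_right [BraidedCategory T.Algebra] (hnat : FreeTensorNatural ξ)
    (hleft : FreeTensorLeftUnital ξ ι) (hsymm : FreeTensorSymmetric ξ) :
    B.comul ξ ≫ (𝟙 X ⊗ₘ B.counit ι) = (ρ_ X).inv := by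
  rw [← comul_braiding hsymm, Category.assoc, ← BraidedCategory.braiding_naturality,
    reassoc_of% comul_counit_left hnat hleft, leftUnitor_inv_braiding]

theorem comul_coassoc [BraidedCategory T.Algebra] (hnat : FreeTensorNatural ξ)
    (hassoc : FreeTensorAssociative ξ) (hsymm : FreeTensorSymmetric ξ) :
    B.comul ξ ≫ (B.comul ξ ⊗ₘ 𝟙 X) ≫ (α_ X X X).hom = B.comul ξ ≫ (𝟙 X ⊗ₘ B.comul ξ) := by
  have hlhs : B.comul ξ ≫ (B.comul ξ ⊗ₘ 𝟙 X) ≫ (α_ X X X).hom =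
      B.hom ≫ freeComul ξ X.A ≫ (freeComul ξ X.A ⊗ₘ 𝟙 _) ≫ (α_ _ _ _).hom ≫
        (X.fromFree ⊗ₘ (X.fromFree ⊗ₘ X.fromFree)) := by
    rw [comul_eq, Category.assoc, Category.assoc, tensorHom_comp_tensorHom_assoc, Category.comp_id,
      reassoc_of% hom_freeComul_absorb_left hnat, ← associator_naturality,
      tensorHom_comp_tensorHom_assoc, Category.id_comp]
  have hrhs : B.comul ξ ≫ (𝟙 X ⊗ₘ B.comul ξ) =
      B.hom ≫ freeComul ξ X.A ≫ (𝟙 _ ⊗ₘ freeComul ξ X.A) ≫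
        (X.fromFree ⊗ₘ (X.fromFree ⊗ₘ X.fromFree)) := by
    rw [comul_eq, Category.assoc, Category.assoc, tensorHom_comp_tensorHom, Category.comp_id,
      hom_freeComul_absorb_right hnat hsymm, tensorHom_comp_tensorHom, Category.id_comp]
  rw [hlhs, hrhs, reassoc_of% freeComul_coassoc hnat hassoc]

end Basis

end CategoryTheory.Monad

theorem bases_as_coalgebras_stmt18_general {A : Type u} [Category.{v} A]
    [HasFiniteProducts A] (T : Monad A)
    [MonoidalCategory T.Algebra] [SymmetricCategory T.Algebra]
    -- the free functor is strong (symmetric) monoidal: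
    (ξ : ∀ P Q : A, T.free.obj P ⊗ T.free.obj Q ≅ T.free.obj (P ⨯ Q))
    (ι : 𝟙_ T.Algebra ≅ T.free.obj (⊤_ A))
    (hnat : ∀ {P P' Q Q' : A} (f : P ⟶ P') (g : Q ⟶ Q'),
      (T.free.map f ⊗ₘ T.free.map g) ≫ (ξ P' Q').hom =
        (ξ P Q).hom ≫ T.free.map (prod.map f g))
    (hleft : ∀ P : A,
      (ι.hom ⊗ₘ 𝟙 (T.free.obj P)) ≫ (ξ (⊤_ A) P).hom =
        (λ_ (T.free.obj P)).hom ≫ T.free.map (prod.leftUnitor P).inv)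
    (hassoc : ∀ P Q R : A,
      ((ξ P Q).hom ⊗ₘ 𝟙 (T.free.obj R)) ≫ (ξ (P ⨯ Q) R).hom ≫
          T.free.map (prod.associator P Q R).hom =
        (α_ (T.free.obj P) (T.free.obj Q) (T.free.obj R)).hom ≫
          (𝟙 (T.free.obj P) ⊗ₘ (ξ Q R).hom) ≫ (ξ P (Q ⨯ R)).hom)
    (hsymm : ∀ P Q : A,
      (β_ (T.free.obj P) (T.free.obj Q)).hom ≫ (ξ Q P).hom =
        (ξ P Q).hom ≫ T.free.map (prod.braiding P Q).hom)
    -- a basis: a coalgebra for the induced comonad `T̄ = FU` on `Alg(T)`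
    (C : Comonad.Coalgebra T.adj.toComonad) :
    letI d : C.A ⟶ C.A ⊗ C.A :=
      C.a ≫ T.free.map (diag C.A.A) ≫ (ξ C.A.A C.A.A).inv ≫
        (T.adj.counit.app C.A ⊗ₘ T.adj.counit.app C.A)
    letI u : C.A ⟶ 𝟙_ T.Algebra :=
      C.a ≫ T.free.map (terminal.from C.A.A) ≫ ι.inv
    -- commutative comonoid laws
    (d ≫ (u ⊗ₘ 𝟙 C.A) = (λ_ C.A).inv) ∧
    (d ≫ (𝟙 C.A ⊗ₘ u) = (ρ_ C.A).inv) ∧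
    (d ≫ (d ⊗ₘ 𝟙 C.A) ≫ (α_ C.A C.A C.A).hom = d ≫ (𝟙 C.A ⊗ₘ d)) ∧
    (d ≫ (β_ C.A C.A).hom = d) :=
  let B := Monad.Basis.ofCoalgebra C
  ⟨B.comul_counit_left hnat hleft, B.comul_counit_right hnat hleft hsymm,
    B.comul_coassoc hnat hassoc hsymm, B.comul_braiding hsymm⟩

/-- Let `T` be a (commutative) monad on a cartesian category `A` such that the
Eilenberg–Moore category `Alg(T)` is symmetric monoidal with the free functor strong
monoidal, via `ξ : TX ⊗ TY ≅ T(X × Y)` (natural and coherent with the unitors,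
associator and braiding) and `ι : I ≅ T(1)`. Then every `T̄`-coalgebra `C` (a basis,
with structure map `b = C.a` on the algebra `C.A`) induces a commutative comonoid
structure on `C.A` in `Alg(T)`, with counit `u_b = ι⁻¹ ∘ T(!) ∘ b` and
comultiplication `d_b = (a ⊗ a) ∘ ξ⁻¹ ∘ T(Δ) ∘ b`; in particular the counit law
`(u_b ⊗ id) ∘ d_b = λ⁻¹` holds. -/
theorem bases_as_coalgebras_stmt18 {A : Type u} [Category.{v} A]
    [HasFiniteProducts A] (T : Monad A)
    [MonoidalCategory T.Algebra] [SymmetricCategory T.Algebra]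
    -- the free functor is strong (symmetric) monoidal:
    (ξ : ∀ P Q : A, T.free.obj P ⊗ T.free.obj Q ≅ T.free.obj (P ⨯ Q))
    (ι : 𝟙_ T.Algebra ≅ T.free.obj (⊤_ A))
    (hnat : ∀ {P P' Q Q' : A} (f : P ⟶ P') (g : Q ⟶ Q'),
      (T.free.map f ⊗ₘ T.free.map g) ≫ (ξ P' Q').hom =
        (ξ P Q).hom ≫ T.free.map (prod.map f g))
    (hleft : ∀ P : A,
      (ι.hom ⊗ₘ 𝟙 (T.free.obj P)) ≫ (ξ (⊤_ A) P).hom =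
        (λ_ (T.free.obj P)).hom ≫ T.free.map (prod.leftUnitor P).inv)
    (hright : ∀ P : A,
      (𝟙 (T.free.obj P) ⊗ₘ ι.hom) ≫ (ξ P (⊤_ A)).hom =
        (ρ_ (T.free.obj P)).hom ≫ T.free.map (prod.rightUnitor P).inv)
    (hassoc : ∀ P Q R : A,
      ((ξ P Q).hom ⊗ₘ 𝟙 (T.free.obj R)) ≫ (ξ (P ⨯ Q) R).hom ≫
          T.free.map (prod.associator P Q R).hom =
        (α_ (T.free.obj P) (T.free.obj Q) (T.free.obj R)).hom ≫
          (𝟙 (T.free.obj P) ⊗ₘ (ξ Q R).hom) ≫ (ξ P (Q ⨯ R)).hom)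
    (hsymm : ∀ P Q : A,
      (β_ (T.free.obj P) (T.free.obj Q)).hom ≫ (ξ Q P).hom =
        (ξ P Q).hom ≫ T.free.map (prod.braiding P Q).hom)
    -- a basis: a coalgebra for the induced comonad `T̄ = FU` on `Alg(T)`
    (C : Comonad.Coalgebra T.adj.toComonad) :
    letI d : C.A ⟶ C.A ⊗ C.A :=
      C.a ≫ T.free.map (diag C.A.A) ≫ (ξ C.A.A C.A.A).inv ≫
        (T.adj.counit.app C.A ⊗ₘ T.adj.counit.app C.A)
    letI u : C.A ⟶ 𝟙_ T.Algebra :=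
      C.a ≫ T.free.map (terminal.from C.A.A) ≫ ι.inv
    -- commutative comonoid laws
    (d ≫ (u ⊗ₘ 𝟙 C.A) = (λ_ C.A).inv) ∧
    (d ≫ (𝟙 C.A ⊗ₘ u) = (ρ_ C.A).inv) ∧
    (d ≫ (d ⊗ₘ 𝟙 C.A) ≫ (α_ C.A C.A C.A).hom = d ≫ (𝟙 C.A ⊗ₘ d)) ∧
    (d ≫ (β_ C.A C.A).hom = d) :=
  bases_as_coalgebras_stmt18_general T ξ ι hnat hleft hassoc hsymm C
end

section
/- Let T be a commutative monad on a cartesian category with monoidal Alg(T) as above, a : TX → X an algebra with T̄-coalgebra b : X → TX, and x : I → X a map of algebras that lies in the basis, i.e., b ∘ x = T(x ∘ η₁) where x = a ∘ T(x ∘ η₁). Then x is copyable for the induced comultiplication: d_b ∘ x = (x ⊗ x) ∘ ρ, where ρ : I ≅ I ⊗ I and d_b = (a ⊗ a) ∘ ξ⁻¹ ∘ T(Δ) ∘ b. -/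
/-!
A point of the form `ι ≫ T(x')` is copyable in the free algebra, because `Δ` commutes with
every point `x'` and the free functor turns `Δ₁ : 1 ≅ 1 × 1` into `ρ : I ≅ I ⊗ I`. Lying in
the basis says precisely that `b ∘ x` is such a free point, and the counits `a ⊗ a` carry
`T(x') ⊗ T(x')` back to `x ⊗ x`.
-/

open CategoryTheory CategoryTheory.Limits CategoryTheory.MonoidalCategory

theorem diag_terminal_eq_leftUnitor_inv {C : Type*} [Category C] [HasTerminal C]
    [HasBinaryProduct (⊤_ C) (⊤_ C)] : diag (⊤_ C) = (prod.leftUnitor (⊤_ C)).inv := by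
  ext

section FreeFunctor

variable {A : Type*} [Category A] [HasBinaryProducts A] {T : Monad A}
  [MonoidalCategory T.Algebra] {ξ : ∀ P Q : A, T.free.obj P ⊗ T.free.obj Q ≅ T.free.obj (P ⨯ Q)}

theorem free_map_prodMap_comp_inv
    (hnat : ∀ {P P' Q Q' : A} (f : P ⟶ P') (g : Q ⟶ Q'),
      (T.free.map f ⊗ₘ T.free.map g) ≫ (ξ P' Q').hom =
        (ξ P Q).hom ≫ T.free.map (prod.map f g))
    {P P' Q Q' : A} (f : P ⟶ P') (g : Q ⟶ Q') :
    T.free.map (prod.map f g) ≫ (ξ P' Q').inv = (ξ P Q).inv ≫ (T.free.map f ⊗ₘ T.free.map g) := by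
  rw [Iso.comp_inv_eq, Category.assoc, hnat, Iso.inv_hom_id_assoc]

variable [HasTerminal A] (ι : 𝟙_ T.Algebra ≅ T.free.obj (⊤_ A))

theorem unit_comp_free_map_diag_terminal_comp_inv
    (hleft : (ι.hom ⊗ₘ 𝟙 (T.free.obj (⊤_ A))) ≫ (ξ (⊤_ A) (⊤_ A)).hom =
      (λ_ (T.free.obj (⊤_ A))).hom ≫ T.free.map (prod.leftUnitor (⊤_ A)).inv) :
    ι.hom ≫ T.free.map (diag (⊤_ A)) ≫ (ξ (⊤_ A) (⊤_ A)).inv =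
      (λ_ (𝟙_ T.Algebra)).inv ≫ (ι.hom ⊗ₘ ι.hom) := by
  have hdiag : T.free.map (diag (⊤_ A)) ≫ (ξ (⊤_ A) (⊤_ A)).inv =
      (λ_ (T.free.obj (⊤_ A))).inv ≫ (ι.hom ⊗ₘ 𝟙 (T.free.obj (⊤_ A))) := by
    rw [diag_terminal_eq_leftUnitor_inv, Iso.comp_inv_eq, Category.assoc, hleft,
      Iso.inv_hom_id_assoc]
  rw [hdiag, reassoc_of% leftUnitor_inv_naturality, ← id_tensorHom, tensorHom_comp_tensorHom,
    Category.id_comp, Category.comp_id]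

theorem unit_comp_free_map_point_comp_diag_comp_inv
    (hnat : ∀ {P P' Q Q' : A} (f : P ⟶ P') (g : Q ⟶ Q'),
      (T.free.map f ⊗ₘ T.free.map g) ≫ (ξ P' Q').hom =
        (ξ P Q).hom ≫ T.free.map (prod.map f g))
    (hleft : (ι.hom ⊗ₘ 𝟙 (T.free.obj (⊤_ A))) ≫ (ξ (⊤_ A) (⊤_ A)).hom =
      (λ_ (T.free.obj (⊤_ A))).hom ≫ T.free.map (prod.leftUnitor (⊤_ A)).inv)
    {P : A} (p : ⊤_ A ⟶ P) :
    ι.hom ≫ T.free.map (p ≫ diag P) ≫ (ξ P P).inv =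
      (λ_ (𝟙_ T.Algebra)).inv ≫ ((ι.hom ≫ T.free.map p) ⊗ₘ (ι.hom ≫ T.free.map p)) := by
  rw [← prod.diag_map, Functor.map_comp, Category.assoc, free_map_prodMap_comp_inv hnat,
    reassoc_of% unit_comp_free_map_diag_terminal_comp_inv ι hleft, tensorHom_comp_tensorHom]

theorem unit_comp_free_map_comp_diag_comp_inv_comp_tensorHom
    (hnat : ∀ {P P' Q Q' : A} (f : P ⟶ P') (g : Q ⟶ Q'),
      (T.free.map f ⊗ₘ T.free.map g) ≫ (ξ P' Q').hom =
        (ξ P Q).hom ≫ T.free.map (prod.map f g))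
    (hleft : (ι.hom ⊗ₘ 𝟙 (T.free.obj (⊤_ A))) ≫ (ξ (⊤_ A) (⊤_ A)).hom =
      (λ_ (T.free.obj (⊤_ A))).hom ≫ T.free.map (prod.leftUnitor (⊤_ A)).inv)
    {P : A} {X : T.Algebra} (p : ⊤_ A ⟶ P) (ε : T.free.obj P ⟶ X) :
    (ι.hom ≫ T.free.map p) ≫ T.free.map (diag P) ≫ (ξ P P).inv ≫ (ε ⊗ₘ ε) =
      (λ_ (𝟙_ T.Algebra)).inv ≫
        ((ι.hom ≫ T.free.map p ≫ ε) ⊗ₘ (ι.hom ≫ T.free.map p ≫ ε)) := by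
  rw [Category.assoc, ← Functor.map_comp_assoc,
    reassoc_of% unit_comp_free_map_point_comp_diag_comp_inv ι hnat hleft, tensorHom_comp_tensorHom]
  simp only [Category.assoc]

end FreeFunctor

theorem bases_as_coalgebras_stmt19_general {A : Type u} [Category.{v} A]
    [HasFiniteProducts A] (T : Monad A)
    [MonoidalCategory T.Algebra]
    -- the free functor is strong (symmetric) monoidal:
    (ξ : ∀ P Q : A, T.free.obj P ⊗ T.free.obj Q ≅ T.free.obj (P ⨯ Q))
    (ι : 𝟙_ T.Algebra ≅ T.free.obj (⊤_ A))
    (hnat : ∀ {P P' Q Q' : A} (f : P ⟶ P') (g : Q ⟶ Q'),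
      (T.free.map f ⊗ₘ T.free.map g) ≫ (ξ P' Q').hom =
        (ξ P Q).hom ≫ T.free.map (prod.map f g))
    (hleft : ∀ P : A,
      (ι.hom ⊗ₘ 𝟙 (T.free.obj P)) ≫ (ξ (⊤_ A) P).hom =
        (λ_ (T.free.obj P)).hom ≫ T.free.map (prod.leftUnitor P).inv)
    -- a basis: a coalgebra for the induced comonad `T̄ = FU` on `Alg(T)`
    (C : Comonad.Coalgebra T.adj.toComonad)
    -- an element `x : I → C.A` of the algebra, with underlying point
    -- `x' = x ∘ η₁ : 1 → X`
    (x : 𝟙_ T.Algebra ⟶ C.A)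
    (x' : (⊤_ A) ⟶ C.A.A)
    -- `x` is the transpose of `x'` : `x = a ∘ T(x')`
    (hx : x = ι.hom ≫ T.free.map x' ≫ T.adj.counit.app C.A)
    -- `x` lies in the basis : `b ∘ x = T(x')`
    (hbasis : x ≫ C.a = ι.hom ≫ T.free.map x') :
    x ≫ (C.a ≫ T.free.map (diag C.A.A) ≫ (ξ C.A.A C.A.A).inv ≫
        (T.adj.counit.app C.A ⊗ₘ T.adj.counit.app C.A)) =
      (λ_ (𝟙_ T.Algebra)).inv ≫ (x ⊗ₘ x) := by
  subst hx
  exact (Category.assoc _ _ _).symm.trans ((eq_whisker hbasis _).trans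
    (unit_comp_free_map_comp_diag_comp_inv_comp_tensorHom ι hnat (hleft _) x' _))

/-- Let `T` be a (commutative) monad on a cartesian category with monoidal
Eilenberg–Moore category as in the comonoid construction, `C` a `T̄`-coalgebra (basis
`b = C.a` on the algebra `C.A`), and `x : I → C.A` a map of algebras that lies in the
basis, i.e. `b ∘ x = T(x')` where `x' = x ∘ η₁ : 1 → X` and `x = a ∘ T(x')`. Then `x`
is copyable for the induced comultiplication
`d_b = (a ⊗ a) ∘ ξ⁻¹ ∘ T(Δ) ∘ b`: one has `d_b ∘ x = (x ⊗ x) ∘ ρ` with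
`ρ : I ≅ I ⊗ I`. -/
theorem bases_as_coalgebras_stmt19 {A : Type u} [Category.{v} A]
    [HasFiniteProducts A] (T : Monad A)
    [MonoidalCategory T.Algebra] [SymmetricCategory T.Algebra]
    -- the free functor is strong (symmetric) monoidal:
    (ξ : ∀ P Q : A, T.free.obj P ⊗ T.free.obj Q ≅ T.free.obj (P ⨯ Q))
    (ι : 𝟙_ T.Algebra ≅ T.free.obj (⊤_ A))
    (hnat : ∀ {P P' Q Q' : A} (f : P ⟶ P') (g : Q ⟶ Q'),
      (T.free.map f ⊗ₘ T.free.map g) ≫ (ξ P' Q').hom =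
        (ξ P Q).hom ≫ T.free.map (prod.map f g))
    (hleft : ∀ P : A,
      (ι.hom ⊗ₘ 𝟙 (T.free.obj P)) ≫ (ξ (⊤_ A) P).hom =
        (λ_ (T.free.obj P)).hom ≫ T.free.map (prod.leftUnitor P).inv)
    (hright : ∀ P : A,
      (𝟙 (T.free.obj P) ⊗ₘ ι.hom) ≫ (ξ P (⊤_ A)).hom =
        (ρ_ (T.free.obj P)).hom ≫ T.free.map (prod.rightUnitor P).inv)
    -- a basis: a coalgebra for the induced comonad `T̄ = FU` on `Alg(T)`
    (C : Comonad.Coalgebra T.adj.toComonad)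
    -- an element `x : I → C.A` of the algebra, with underlying point
    -- `x' = x ∘ η₁ : 1 → X`
    (x : 𝟙_ T.Algebra ⟶ C.A)
    (x' : (⊤_ A) ⟶ C.A.A)
    (hx' : x' = T.η.app (⊤_ A) ≫ (ι.inv ≫ x).f)
    -- `x` is the transpose of `x'` : `x = a ∘ T(x')`
    (hx : x = ι.hom ≫ T.free.map x' ≫ T.adj.counit.app C.A)
    -- `x` lies in the basis : `b ∘ x = T(x')`
    (hbasis : x ≫ C.a = ι.hom ≫ T.free.map x') :
    x ≫ (C.a ≫ T.free.map (diag C.A.A) ≫ (ξ C.A.A C.A.A).inv ≫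
        (T.adj.counit.app C.A ⊗ₘ T.adj.counit.app C.A)) =
      (λ_ (𝟙_ T.Algebra)).inv ≫ (x ⊗ₘ x) :=
  bases_as_coalgebras_stmt19_general T ξ ι hnat hleft C x x' hx hbasis
end
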